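/- arXiv:1508.04791 — 6 statements merged into one kernel-verified Lean document; each statement's English description precedes it below -/
import Mathlib

section
/- Let b and s be integers with 2 ≤ b < s, and define M̂(x) = ((1+x)^s − 1)/b for x ≥ 0. For every λ > 0 there is a constant C > 0 such that for all 0 ≤ x ≤ λ and all integers N ≥ n ≥ 0, the (N−n)-fold iterate satisfies M̂^{N−n}(x·(b/s)^N) ≤ C·x·(b/s)^n. -/
set_option maxHeartbeats 1000000

open Filter

private def Eaux (lam : ℝ) (s : ℕ) : ℕ → ℝ
  | 0 => 2
  | d + 1 => Eaux lam s d * (1 + Eaux lam s d * lam) ^ s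

private lemma Eaux_two_le (lam : ℝ) (s : ℕ) (hlam : 0 ≤ lam) : ∀ d, 2 ≤ Eaux lam s d := by
  intro d
  induction d with
  | zero => simp [Eaux]
  | succ d ih =>
    have h0 : 0 ≤ Eaux lam s d * lam := mul_nonneg (by linarith) hlam
    have h1 : (1:ℝ) ≤ (1 + Eaux lam s d * lam) ^ s := one_le_pow₀ (by linarith)
    calc (2:ℝ) ≤ Eaux lam s d := ih
      _ = Eaux lam s d * 1 := by ring
      _ ≤ Eaux lam s d * (1 + Eaux lam s d * lam) ^ s :=
          mul_le_mul_of_nonneg_left h1 (by linarith)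
      _ = Eaux lam s (d+1) := by rw [Eaux]

private lemma Eaux_mono (lam : ℝ) (s : ℕ) (hlam : 0 ≤ lam) : Monotone (Eaux lam s) := by
  apply monotone_nat_of_le_succ
  intro d
  have h2 := Eaux_two_le lam s hlam d
  have h0 : 0 ≤ Eaux lam s d * lam := mul_nonneg (by linarith) hlam
  have h1 : (1:ℝ) ≤ (1 + Eaux lam s d * lam) ^ s := one_le_pow₀ (by linarith)
  calc Eaux lam s d = Eaux lam s d * 1 := by ring
    _ ≤ Eaux lam s d * (1 + Eaux lam s d * lam) ^ s :=
        mul_le_mul_of_nonneg_left h1 (by linarith)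
    _ = Eaux lam s (d+1) := by rw [Eaux]

private lemma pow_one_add_sub_one_le (t : ℝ) (ht : 0 ≤ t) :
    ∀ n : ℕ, (1 + t) ^ (n + 1) - 1 ≤ (n + 1 : ℕ) * t * (1 + t) ^ n := by
  intro n
  induction n with
  | zero => norm_num
  | succ n ih =>
    have h1 : (1:ℝ) ≤ (1 + t) ^ (n + 1) := one_le_pow₀ (by linarith)
    have h0 : (0:ℝ) ≤ (1 + t) ^ n := by positivity
    push_cast
    push_cast at ih
    have hmul := mul_le_mul_of_nonneg_left ih (by linarith : (0:ℝ) ≤ 1 + t)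
    have ht1 : t ≤ t * (1 + t) ^ (n + 1) := le_mul_of_one_le_right ht h1
    calc (1 + t) ^ (n + 1 + 1) - 1
        = (1 + t) * ((1 + t) ^ (n + 1) - 1) + t := by ring
      _ ≤ (1 + t) * ((↑n + 1) * t * (1 + t) ^ n) + t := by linarith [hmul]
      _ = (↑n + 1) * t * (1 + t) ^ (n + 1) + t := by ring
      _ ≤ (↑n + 1) * t * (1 + t) ^ (n + 1) + t * (1 + t) ^ (n + 1) := by linarith [ht1]
      _ = (↑n + 1 + 1) * t * (1 + t) ^ (n + 1) := by ring

/-- For `2 ≤ b < s` and `M̂(x) = ((1+x)^s − 1)/b`, for every `λ > 0`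
there is `C > 0` such that for all `0 ≤ x ≤ λ` and all integers `N ≥ n ≥ 0`,
`M̂^[N−n] (x·(b/s)^N) ≤ C·x·(b/s)^n`. -/
theorem stmt6 (b s : ℕ) (hb : 2 ≤ b) (hbs : b < s)
    (Mhat : ℝ → ℝ) (hMhat : ∀ x : ℝ, Mhat x = ((1 + x) ^ s - 1) / b) :
    ∀ lam : ℝ, 0 < lam → ∃ C : ℝ, 0 < C ∧
      ∀ x : ℝ, 0 ≤ x → x ≤ lam → ∀ N n : ℕ, n ≤ N →
        Mhat^[N - n] (x * ((b : ℝ) / s) ^ N) ≤ C * x * ((b : ℝ) / s) ^ n := by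
  intro lam hlam
  have hb0 : (0:ℝ) < b := by
    have : 0 < b := by omega
    exact_mod_cast this
  have hs0 : (0:ℝ) < s := by
    have : 0 < s := by omega
    exact_mod_cast this
  have hbsR : (b:ℝ) < s := by exact_mod_cast hbs
  set q : ℝ := (b:ℝ) / s with hqdef
  have hq0 : 0 < q := by positivity
  have hq1 : q < 1 := (div_lt_one hs0).mpr hbsR
  have h1q : 0 < 1 - q := by linarith
  have hqne : q ≠ 0 := ne_of_gt hq0
  have hqinv : q⁻¹ = (s:ℝ) / b := by rw [hqdef, inv_div]
  -- basic properties of Mhat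
  have hM_nonneg : ∀ t : ℝ, 0 ≤ t → 0 ≤ Mhat t := by
    intro t ht
    rw [hMhat]
    have : (1:ℝ) ≤ (1 + t) ^ s := one_le_pow₀ (by linarith)
    apply div_nonneg (by linarith) (le_of_lt hb0)
  have hM_mono : ∀ t u : ℝ, 0 ≤ t → t ≤ u → Mhat t ≤ Mhat u := by
    intro t u ht htu
    rw [hMhat, hMhat]
    have : (1 + t) ^ s ≤ (1 + u) ^ s := pow_le_pow_left₀ (by linarith) (by linarith) s
    gcongr
  have hM_le : ∀ t : ℝ, 0 ≤ t → Mhat t ≤ q⁻¹ * (t * (1 + t) ^ s) := by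
    intro t ht
    rw [hMhat, hqinv]
    have hs1 : s - 1 + 1 = s := by omega
    have key := pow_one_add_sub_one_le t ht (s - 1)
    rw [hs1] at key
    have h2 : (1 + t) ^ (s-1) ≤ (1 + t) ^ s :=
      pow_le_pow_right₀ (by linarith) (by omega)
    have h3 : (1 + t) ^ s - 1 ≤ (s:ℝ) * t * (1 + t) ^ s := by
      calc (1 + t) ^ s - 1 ≤ (s:ℝ) * t * (1 + t) ^ (s-1) := by
            exact key
        _ ≤ (s:ℝ) * t * (1 + t) ^ s := by
            apply mul_le_mul_of_nonneg_left h2; positivity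
    rw [div_le_iff₀ hb0]
    calc (1 + t) ^ s - 1 ≤ (s:ℝ) * t * (1 + t) ^ s := h3
      _ = (s:ℝ) / b * (t * (1 + t) ^ s) * b := by field_simp
  have hIter_nonneg : ∀ (k : ℕ) (t : ℝ), 0 ≤ t → 0 ≤ Mhat^[k] t := by
    intro k
    induction k with
    | zero => intro t ht; simpa using ht
    | succ k ih =>
      intro t ht
      rw [Function.iterate_succ_apply']
      exact hM_nonneg _ (ih t ht)
  -- constant c and threshold m₀
  set c : ℝ := 2 * s * lam with hcdef
  have hc0 : 0 < c := by positivity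
  obtain ⟨m1, hm1⟩ := exists_pow_lt_of_lt_one
    (show (0:ℝ) < (1 - q) * Real.log 2 / c from
      div_pos (mul_pos h1q (Real.log_pos (by norm_num))) hc0) hq1
  set m₀ : ℕ := m1 + 1 with hm₀def
  have hm₀pos : 1 ≤ m₀ := by omega
  have hqm₀ : q ^ m₀ ≤ (1 - q) * Real.log 2 / c := by
    calc q ^ m₀ ≤ q ^ m1 := pow_le_pow_of_le_one (le_of_lt hq0) (le_of_lt hq1) (by omega)
      _ ≤ (1 - q) * Real.log 2 / c := le_of_lt hm1
  have hexp2 : ∀ r : ℝ, r ≤ q ^ m₀ → Real.exp (c * r / (1 - q)) ≤ 2 := by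
    intro r hr
    have h1 : c * r / (1 - q) ≤ Real.log 2 := by
      rw [div_le_iff₀ h1q]
      calc c * r ≤ c * ((1 - q) * Real.log 2 / c) := by
            apply mul_le_mul_of_nonneg_left _ (le_of_lt hc0)
            exact le_trans hr hqm₀
        _ = Real.log 2 * (1 - q) := by field_simp
    calc Real.exp (c * r / (1 - q)) ≤ Real.exp (Real.log 2) := Real.exp_le_exp.mpr h1
      _ = 2 := Real.exp_log (by norm_num)
  have hqpow_le : ∀ {i j : ℕ}, i ≤ j → q ^ j ≤ q ^ i := fun hij =>
    pow_le_pow_of_le_one (le_of_lt hq0) (le_of_lt hq1) hij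
  -- tail estimate
  have tail : ∀ k : ℕ, ∀ N : ℕ, ∀ x : ℝ, 0 ≤ x → x ≤ lam → k + m₀ ≤ N →
      Mhat^[k] (x * q ^ N) ≤
        x * q ^ (N - k) * Real.exp (c * (q ^ (N - k) - q ^ (N + 1)) / (1 - q)) := by
    intro k
    induction k with
    | zero =>
      intro N x hx hxl hkN
      simp only [Function.iterate_zero, id_eq, Nat.sub_zero]
      have hqq : q ^ (N + 1) ≤ q ^ N := hqpow_le (by omega)
      have harg : 0 ≤ c * (q ^ N - q ^ (N + 1)) / (1 - q) := by
        apply div_nonneg _ (le_of_lt h1q)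
        apply mul_nonneg (le_of_lt hc0); linarith
      have h1e : (1:ℝ) ≤ Real.exp (c * (q ^ N - q ^ (N + 1)) / (1 - q)) := Real.one_le_exp harg
      have hxq : 0 ≤ x * q ^ N := by positivity
      calc x * q ^ N = x * q ^ N * 1 := by ring
        _ ≤ x * q ^ N * Real.exp (c * (q ^ N - q ^ (N + 1)) / (1 - q)) :=
            mul_le_mul_of_nonneg_left h1e hxq
    | succ k ih =>
      intro N x hx hxl hkN
      have hk' : k + m₀ ≤ N := by omega
      set m : ℕ := N - k with hm
      have hmm₀ : m₀ ≤ m := by omega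
      have hm1 : 1 ≤ m := by omega
      have hNk1 : N - (k + 1) = m - 1 := by omega
      rw [Function.iterate_succ_apply']
      set y : ℝ := Mhat^[k] (x * q ^ N) with hy
      have hy0 : 0 ≤ y := hIter_nonneg k _ (by positivity)
      have hyB := ih N x hx hxl hk'
      rw [← hm] at hyB
      -- y ≤ 2 * lam * q ^ m
      have hexple : Real.exp (c * (q ^ m - q ^ (N + 1)) / (1 - q)) ≤ 2 := by
        apply hexp2
        have : (0:ℝ) ≤ q ^ (N+1) := by positivity
        calc q ^ m - q ^ (N+1) ≤ q ^ m := by linarith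
          _ ≤ q ^ m₀ := hqpow_le hmm₀
      have hy2 : y ≤ 2 * lam * q ^ m := by
        calc y ≤ x * q ^ m * Real.exp (c * (q ^ m - q ^ (N + 1)) / (1 - q)) := hyB
          _ ≤ x * q ^ m * 2 := by
              apply mul_le_mul_of_nonneg_left hexple; positivity
          _ ≤ lam * q ^ m * 2 := by
              apply mul_le_mul_of_nonneg_right _ (by norm_num)
              apply mul_le_mul_of_nonneg_right hxl (by positivity)
          _ = 2 * lam * q ^ m := by ring
      -- (1+y)^s ≤ exp (c * q ^ m)
      have hpow_exp : (1 + y) ^ s ≤ Real.exp (c * q ^ m) := by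
        have h1 : 1 + y ≤ Real.exp y := by
          have := Real.add_one_le_exp y; linarith
        calc (1 + y) ^ s ≤ (Real.exp y) ^ s :=
              pow_le_pow_left₀ (by linarith) h1 s
          _ = Real.exp ((s:ℝ) * y) := (Real.exp_nat_mul y s).symm
          _ ≤ Real.exp (c * q ^ m) := by
              apply Real.exp_le_exp.mpr
              calc (s:ℝ) * y ≤ (s:ℝ) * (2 * lam * q ^ m) :=
                    mul_le_mul_of_nonneg_left hy2 (le_of_lt hs0)
                _ = c * q ^ m := by rw [hcdef]; ring
      -- combine
      have hstep : Mhat y ≤ q⁻¹ * ((x * q ^ m *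
          Real.exp (c * (q ^ m - q ^ (N + 1)) / (1 - q))) * Real.exp (c * q ^ m)) := by
        calc Mhat y ≤ q⁻¹ * (y * (1 + y) ^ s) := hM_le y hy0
          _ ≤ q⁻¹ * ((x * q ^ m *
              Real.exp (c * (q ^ m - q ^ (N + 1)) / (1 - q))) * Real.exp (c * q ^ m)) := by
              apply mul_le_mul_of_nonneg_left _ (by positivity)
              apply mul_le_mul hyB hpow_exp (by positivity) (by positivity)
      have hqm : q ^ m = q * q ^ (m - 1) := by
        rw [← pow_succ']
        congr 1
        omega
      have hsum : Real.exp (c * (q ^ m - q ^ (N + 1)) / (1 - q)) * Real.exp (c * q ^ m)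
          = Real.exp (c * (q ^ m - q ^ (N + 1)) / (1 - q) + c * q ^ m) :=
        (Real.exp_add _ _).symm
      have hexp_mono : Real.exp (c * (q ^ m - q ^ (N + 1)) / (1 - q) + c * q ^ m)
          ≤ Real.exp (c * (q ^ (m - 1) - q ^ (N + 1)) / (1 - q)) := by
        apply Real.exp_le_exp.mpr
        rw [div_add' _ _ _ (ne_of_gt h1q)]
        have e1 : q ^ m = q ^ (m-1) * q := by rw [← pow_succ]; congr 1; omega
        have h0 : (0:ℝ) ≤ q ^ (m-1) := by positivity
        gcongr
        rw [e1]
        nlinarith [mul_nonneg (mul_nonneg (le_of_lt hc0) h0) (sq_nonneg (1-q))]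
      calc Mhat y ≤ q⁻¹ * ((x * q ^ m *
            Real.exp (c * (q ^ m - q ^ (N + 1)) / (1 - q))) * Real.exp (c * q ^ m)) := hstep
        _ = x * q ^ (m - 1) * Real.exp (c * (q ^ m - q ^ (N + 1)) / (1 - q) + c * q ^ m) := by
            rw [← hsum, hqm]
            field_simp
        _ ≤ x * q ^ (m - 1) * Real.exp (c * (q ^ (m - 1) - q ^ (N + 1)) / (1 - q)) := by
            apply mul_le_mul_of_nonneg_left hexp_mono (by positivity)
        _ = x * q ^ (N - (k+1)) * Real.exp (c * (q ^ (N - (k+1)) - q ^ (N + 1)) / (1 - q)) := by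
            rw [hNk1]
  -- head estimate
  have headB : ∀ d : ℕ, ∀ N : ℕ, ∀ x : ℝ, 0 ≤ x → x ≤ lam → m₀ - d ≤ N →
      Mhat^[N - (m₀ - d)] (x * q ^ N) ≤ Eaux lam s d * (x * q ^ (m₀ - d)) := by
    intro d
    induction d with
    | zero =>
      intro N x hx hxl hN
      simp only [Nat.sub_zero] at hN ⊢
      have hk : (N - m₀) + m₀ ≤ N := by omega
      have h1 := tail (N - m₀) N x hx hxl hk
      have e1 : N - (N - m₀) = m₀ := by omega
      rw [e1] at h1
      have hexpA : Real.exp (c * (q ^ m₀ - q ^ (N + 1)) / (1 - q)) ≤ 2 := by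
        apply hexp2
        have : (0:ℝ) ≤ q ^ (N+1) := by positivity
        linarith
      calc Mhat^[N - m₀] (x * q ^ N)
          ≤ x * q ^ m₀ * Real.exp (c * (q ^ m₀ - q ^ (N + 1)) / (1 - q)) := h1
        _ ≤ x * q ^ m₀ * 2 := mul_le_mul_of_nonneg_left hexpA (by positivity)
        _ = Eaux lam s 0 * (x * q ^ m₀) := by rw [Eaux]; ring
    | succ d ih =>
      intro N x hx hxl hN
      by_cases hdm : m₀ ≤ d
      · have e1 : m₀ - (d + 1) = 0 := by omega
        have e2 : m₀ - d = 0 := by omega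
        have h1 := ih N x hx hxl (by omega)
        rw [e2] at h1
        rw [e1]
        calc Mhat^[N - 0] (x * q ^ N) ≤ Eaux lam s d * (x * q ^ 0) := h1
          _ ≤ Eaux lam s (d+1) * (x * q ^ 0) := by
              apply mul_le_mul_of_nonneg_right (Eaux_mono lam s (le_of_lt hlam) (by omega))
              positivity
      · set n : ℕ := m₀ - (d + 1) with hndef
        have hn1 : m₀ - d = n + 1 := by omega
        by_cases hNn : N ≤ n
        · have hNeq : N = n := by omega
          have e0 : N - n = 0 := by omega
          rw [e0]
          simp only [Function.iterate_zero, id_eq]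
          have h2 : (2:ℝ) ≤ Eaux lam s (d+1) := Eaux_two_le lam s (le_of_lt hlam) (d+1)
          have : x * q ^ N = x * q ^ n := by rw [hNeq]
          rw [this]
          nlinarith [mul_nonneg hx (le_of_lt (pow_pos hq0 n))]
        · have hn1N : n + 1 ≤ N := by omega
          have e1 : N - n = (N - (n + 1)) + 1 := by omega
          rw [e1, Function.iterate_succ_apply']
          set y : ℝ := Mhat^[N - (n + 1)] (x * q ^ N) with hy
          have hy0 : 0 ≤ y := hIter_nonneg _ _ (by positivity)
          have hyB := ih N x hx hxl (by omega)
          rw [hn1] at hyB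
          have hEd2 : (2:ℝ) ≤ Eaux lam s d := Eaux_two_le lam s (le_of_lt hlam) d
          have hz0 : 0 ≤ Eaux lam s d * (x * q ^ (n+1)) := by
            apply mul_nonneg (by linarith); positivity
          have hxq_lam : x * q ^ (n+1) ≤ lam := by
            calc x * q ^ (n+1) ≤ lam * 1 := by
                  apply mul_le_mul hxl (pow_le_one₀ (le_of_lt hq0) (le_of_lt hq1))
                    (by positivity) (le_of_lt hlam)
              _ = lam := by ring
          have hpowle : (1 + Eaux lam s d * (x * q ^ (n+1))) ^ s
              ≤ (1 + Eaux lam s d * lam) ^ s := by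
            apply pow_le_pow_left₀ (by linarith)
            have : Eaux lam s d * (x * q ^ (n+1)) ≤ Eaux lam s d * lam :=
              mul_le_mul_of_nonneg_left hxq_lam (by linarith)
            linarith
          calc Mhat y ≤ Mhat (Eaux lam s d * (x * q ^ (n+1))) := hM_mono y _ hy0 hyB
            _ ≤ q⁻¹ * ((Eaux lam s d * (x * q ^ (n+1))) *
                (1 + Eaux lam s d * (x * q ^ (n+1))) ^ s) := hM_le _ hz0
            _ ≤ q⁻¹ * ((Eaux lam s d * (x * q ^ (n+1))) * (1 + Eaux lam s d * lam) ^ s) := by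
                apply mul_le_mul_of_nonneg_left _ (by positivity)
                exact mul_le_mul_of_nonneg_left hpowle hz0
            _ = Eaux lam s (d+1) * (x * q ^ n) := by
                rw [Eaux, pow_succ]
                field_simp
  -- conclusion
  refine ⟨Eaux lam s m₀, by linarith [Eaux_two_le lam s (le_of_lt hlam) m₀], ?_⟩
  intro x hx hxl N n hn
  have hE2 : (2:ℝ) ≤ Eaux lam s m₀ := Eaux_two_le lam s (le_of_lt hlam) m₀
  by_cases hnm : m₀ ≤ n
  · have hk : (N - n) + m₀ ≤ N := by omega
    have h1 := tail (N - n) N x hx hxl hk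
    have e1 : N - (N - n) = n := by omega
    rw [e1] at h1
    have hexpn : Real.exp (c * (q ^ n - q ^ (N + 1)) / (1 - q)) ≤ 2 := by
      apply hexp2
      have h0 : (0:ℝ) ≤ q ^ (N+1) := by positivity
      have := hqpow_le hnm
      linarith
    calc Mhat^[N - n] (x * q ^ N)
        ≤ x * q ^ n * Real.exp (c * (q ^ n - q ^ (N + 1)) / (1 - q)) := h1
      _ ≤ x * q ^ n * 2 := mul_le_mul_of_nonneg_left hexpn (by positivity)
      _ ≤ Eaux lam s m₀ * x * q ^ n := by
          have h0 : 0 ≤ x * q ^ n := by positivity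
          have := mul_le_mul_of_nonneg_right hE2 h0
          linarith
  · have h1 := headB (m₀ - n) N x hx hxl (by omega)
    have e1 : m₀ - (m₀ - n) = n := by omega
    rw [e1] at h1
    calc Mhat^[N - n] (x * q ^ N) ≤ Eaux lam s (m₀ - n) * (x * q ^ n) := h1
      _ ≤ Eaux lam s m₀ * (x * q ^ n) := by
          apply mul_le_mul_of_nonneg_right (Eaux_mono lam s (le_of_lt hlam) (by omega))
          positivity
      _ = Eaux lam s m₀ * x * q ^ n := by ring
end

section
/- Let b and s be integers with 2 ≤ b < s, and define M̂(x) = ((1+x)^s − 1)/b for x ≥ 0. For every λ > 0 there is a constant C > 0 such that for all 0 ≤ x ≤ λ and all integers N ≥ n ≥ 0, M̂^{N−n}(x·(b/s)^N) − x·(b/s)^n ≤ C·x²·(b/s)^{2n}. -/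
/-!
With `r = b/s` and `u = x r^n`, the claim reads `M̂^[k] (u r^k) ≤ u + C u²` uniformly
in `k` and `u ∈ [0, λ]`. On `[0, 1]` we have `M̂ y ≤ y / r + K y²`, and the bound `u + C u²`
propagates from `u r` to `u` by induction on `k` as long as `C u ≤ 1`, once `C (1 - r)`
dominates `K`. For larger `u` the orbit values are bounded: choosing `m` with `C λ r^m ≤ 1`,
the first `k - m` steps stay in the small regime, so `M̂^[k] (u r^k) ≤ M̂^[m] (2λ)`; and a
constant is `O(u²)` since `C u > 1`.
-/

open Set Function

theorem MonotoneOn.iterate {α : Type*} [Preorder α] {f : α → α} {s : Set α}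
    (hf : MonotoneOn f s) (hs : MapsTo f s s) : ∀ k : ℕ, MonotoneOn f^[k] s
  | 0 => monotoneOn_id
  | k + 1 => by
    rw [iterate_succ']
    exact hf.comp (hf.iterate hs k) (hs.iterate k)

theorem monotone_iterate_of_le_map_on {α : Type*} [Preorder α] {f : α → α} {s : Set α}
    (hs : MapsTo f s s) (hle : ∀ y ∈ s, y ≤ f y) {y : α} (hy : y ∈ s) :
    Monotone fun k => f^[k] y :=
  monotone_nat_of_le_succ fun k => by
    rw [iterate_succ_apply']
    exact hle _ (hs.iterate k hy)

section QuadraticBound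

variable {f : ℝ → ℝ} {r K : ℝ}

theorem exists_iterate_mul_pow_le_add_sq_of_mul_le_one (hr0 : 0 < r) (hr1 : r < 1)
    (hK : 0 ≤ K) (hmaps : MapsTo f (Ici 0) (Ici 0))
    (hquad : ∀ y ∈ Icc (0 : ℝ) 1, f y ≤ y / r + K * y ^ 2) :
    ∃ C : ℝ, 0 < C ∧ ∀ (k : ℕ) (u : ℝ), 0 ≤ u → C * u ≤ 1 →
      f^[k] (u * r ^ k) ≤ u + C * u ^ 2 := by
  -- `C ≥ 2` keeps the orbit below `2 u r ≤ 1`, and `C (1 - r) ≥ 4 K` absorbs the quadratic term.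
  set C := (2 + 4 * K) / (1 - r) with hCdef
  have hC2 : 2 ≤ C := by
    rw [hCdef, le_div_iff₀ (by linarith)]
    nlinarith
  have hCr : C * r + 4 * K * r ^ 2 ≤ C := by
    have hC : C * (1 - r) = 2 + 4 * K := div_mul_cancel₀ _ (by linarith)
    nlinarith [mul_le_mul_of_nonneg_left (pow_le_one₀ hr0.le hr1.le : r ^ 2 ≤ 1) hK]
  refine ⟨C, by linarith, fun k => ?_⟩
  induction k with
  | zero =>
    intro u _ _
    simp only [iterate_zero_apply, pow_zero, mul_one, le_add_iff_nonneg_right]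
    positivity
  | succ k ih =>
    intro u hu hCu
    set v := u * r with hv
    have hv0 : 0 ≤ v := by positivity
    have hCv : C * v ≤ 1 := by nlinarith
    rw [show u * r ^ (k + 1) = v * r ^ k by ring, iterate_succ_apply']
    set y := f^[k] (v * r ^ k)
    have hy0 : 0 ≤ y := hmaps.iterate k (mul_nonneg hv0 (by positivity))
    have hyv : y ≤ v + C * v ^ 2 := ih v hv0 hCv
    have hy2v : y ≤ 2 * v := by nlinarith
    calc f y ≤ y / r + K * y ^ 2 := hquad y ⟨hy0, by nlinarith⟩
      _ ≤ (v + C * v ^ 2) / r + K * (2 * v) ^ 2 := by gcongr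
      _ = u + (C * r + 4 * K * r ^ 2) * u ^ 2 := by rw [hv]; field_simp; ring
      _ ≤ u + C * u ^ 2 := by gcongr

theorem iterate_mul_pow_le_iterate (hr0 : 0 < r) (hr1 : r < 1)
    (hmono : MonotoneOn f (Ici 0)) (hle : ∀ y, 0 ≤ y → y ≤ f y) {C₀ : ℝ}
    (hC₀ : 0 ≤ C₀) (hsmall : ∀ (k : ℕ) (u : ℝ), 0 ≤ u → C₀ * u ≤ 1 →
      f^[k] (u * r ^ k) ≤ u + C₀ * u ^ 2)
    {lam : ℝ} {m : ℕ} (hm : C₀ * lam * r ^ m ≤ 1) {k : ℕ} {u : ℝ} (hu : 0 ≤ u)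
    (hul : u ≤ lam) : f^[k] (u * r ^ k) ≤ f^[m] (2 * lam) := by
  have hmaps : MapsTo f (Ici 0) (Ici 0) := fun y hy => le_trans hy (hle y hy)
  have hur : ∀ j : ℕ, u * r ^ j ≤ lam := fun j =>
    (mul_le_of_le_one_right hu (pow_le_one₀ hr0.le hr1.le)).trans hul
  have h2lam : (0 : ℝ) ≤ 2 * lam := by linarith
  rcases le_total k m with hkm | hmk
  · calc f^[k] (u * r ^ k) ≤ f^[k] (2 * lam) :=
          hmono.iterate hmaps k (by positivity : (0 : ℝ) ≤ u * r ^ k) h2lam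
            (by linarith [hur k])
      _ ≤ f^[m] (2 * lam) := monotone_iterate_of_le_map_on hmaps hle h2lam hkm
  · obtain ⟨j, rfl⟩ := Nat.exists_eq_add_of_le hmk
    have hum : 0 ≤ u * r ^ m := by positivity
    have hCum : C₀ * (u * r ^ m) ≤ 1 := by
      calc C₀ * (u * r ^ m) ≤ C₀ * lam * r ^ m := by rw [← mul_assoc]; gcongr
        _ ≤ 1 := hm
    rw [pow_add, ← mul_assoc, iterate_add_apply]
    refine hmono.iterate hmaps m (hmaps.iterate j (mul_nonneg hum (by positivity))) h2lam ?_
    calc f^[j] (u * r ^ m * r ^ j) ≤ u * r ^ m + C₀ * (u * r ^ m) ^ 2 := hsmall _ _ hum hCum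
      _ ≤ 2 * lam := by nlinarith [hur m]

theorem exists_iterate_mul_pow_le_add_sq (hr0 : 0 < r) (hr1 : r < 1) (hK : 0 ≤ K)
    (hmono : MonotoneOn f (Ici 0)) (hle : ∀ y, 0 ≤ y → y ≤ f y)
    (hquad : ∀ y ∈ Icc (0 : ℝ) 1, f y ≤ y / r + K * y ^ 2) (lam : ℝ) :
    ∃ C : ℝ, 0 < C ∧ ∀ (k : ℕ) (u : ℝ), 0 ≤ u → u ≤ lam →
      f^[k] (u * r ^ k) ≤ u + C * u ^ 2 := by
  have hmaps : MapsTo f (Ici 0) (Ici 0) := fun y hy => le_trans hy (hle y hy)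
  obtain ⟨C₀, hC₀, hsmall⟩ :=
    exists_iterate_mul_pow_le_add_sq_of_mul_le_one hr0 hr1 hK hmaps hquad
  obtain ⟨m, hm⟩ : ∃ m : ℕ, C₀ * lam * r ^ m ≤ 1 := by
    have := (tendsto_pow_atTop_nhds_zero_of_lt_one hr0.le hr1).const_mul (C₀ * lam)
    rw [mul_zero] at this
    exact (this.eventually (eventually_le_nhds one_pos)).exists
  set B := f^[m] (2 * lam)
  refine ⟨max C₀ (B * C₀ ^ 2), hC₀.trans_le (le_max_left _ _), fun k u hu hul => ?_⟩
  by_cases hCu : C₀ * u ≤ 1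
  · calc f^[k] (u * r ^ k) ≤ u + C₀ * u ^ 2 := hsmall k u hu hCu
      _ ≤ u + max C₀ (B * C₀ ^ 2) * u ^ 2 := by gcongr; exact le_max_left _ _
  · have hB : 2 * lam ≤ B :=
      monotone_iterate_of_le_map_on hmaps hle (by linarith : (0 : ℝ) ≤ 2 * lam) (Nat.zero_le m)
    have hCu2 : 1 ≤ (C₀ * u) ^ 2 := by nlinarith
    calc f^[k] (u * r ^ k) ≤ B :=
          iterate_mul_pow_le_iterate hr0 hr1 hmono hle hC₀.le hsmall hm hu hul
      _ ≤ B * C₀ ^ 2 * u ^ 2 := by nlinarith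
      _ ≤ u + max C₀ (B * C₀ ^ 2) * u ^ 2 := by
        nlinarith [le_max_right C₀ (B * C₀ ^ 2), sq_nonneg u]

end QuadraticBound

theorem one_add_pow_le_one_add_mul_add_three_pow_mul_sq (s : ℕ) {y : ℝ} (hy0 : 0 ≤ y)
    (hy1 : y ≤ 1) : (1 + y) ^ s ≤ 1 + s * y + 3 ^ s * y ^ 2 := by
  induction s with
  | zero => simp; positivity
  | succ n ih =>
    have hn : (n : ℝ) ≤ 3 ^ n := by
      exact_mod_cast (Nat.lt_pow_self (by norm_num : 1 < 3)).le
    have h3 : (0 : ℝ) < 3 ^ n := by positivity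
    calc (1 + y) ^ (n + 1) = (1 + y) ^ n * (1 + y) := pow_succ _ _
      _ ≤ (1 + n * y + 3 ^ n * y ^ 2) * (1 + y) := by gcongr
      _ ≤ 1 + (n + 1 : ℕ) * y + 3 ^ (n + 1) * y ^ 2 := by
        push_cast
        rw [pow_succ (3 : ℝ) n]
        nlinarith [mul_nonneg (sub_nonneg.mpr hn) (sq_nonneg y),
          mul_nonneg h3.le (mul_nonneg (sq_nonneg y) (sub_nonneg.mpr hy1))]

noncomputable def mhat (b s : ℕ) (x : ℝ) : ℝ := ((1 + x) ^ s - 1) / b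

theorem mhat_monotoneOn (b s : ℕ) : MonotoneOn (mhat b s) (Ici 0) := by
  intro a ha c _ hac
  unfold mhat
  gcongr
  linarith [mem_Ici.mp ha]

theorem le_mhat {b s : ℕ} (hb : 0 < b) (hbs : b ≤ s) {y : ℝ} (hy : 0 ≤ y) :
    y ≤ mhat b s y := by
  have hb' : (0 : ℝ) < b := by exact_mod_cast hb
  have hbs' : (b : ℝ) ≤ s := by exact_mod_cast hbs
  rw [mhat, le_div_iff₀ hb']
  nlinarith [one_add_mul_le_pow (by linarith : (-2 : ℝ) ≤ y) s]

theorem mhat_le (b s : ℕ) {y : ℝ} (hy : y ∈ Icc (0 : ℝ) 1) :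
    mhat b s y ≤ y / (b / s) + 3 ^ s / b * y ^ 2 := by
  have h := one_add_pow_le_one_add_mul_add_three_pow_mul_sq s hy.1 hy.2
  rw [mhat, div_div_eq_mul_div, div_mul_eq_mul_div, ← add_div]
  gcongr
  linarith

/-- For `2 ≤ b < s` and `M̂(x) = ((1+x)^s − 1)/b`, for every `λ > 0`
there is `C > 0` such that for all `0 ≤ x ≤ λ` and all integers `N ≥ n ≥ 0`,
`M̂^[N−n] (x·(b/s)^N) − x·(b/s)^n ≤ C·x²·(b/s)^{2n}`. -/
theorem stmt7 (b s : ℕ) (hb : 2 ≤ b) (hbs : b < s)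
    (Mhat : ℝ → ℝ) (hMhat : ∀ x : ℝ, Mhat x = ((1 + x) ^ s - 1) / b) :
    ∀ lam : ℝ, 0 < lam → ∃ C : ℝ, 0 < C ∧
      ∀ x : ℝ, 0 ≤ x → x ≤ lam → ∀ N n : ℕ, n ≤ N →
        Mhat^[N - n] (x * ((b : ℝ) / s) ^ N) - x * ((b : ℝ) / s) ^ n
          ≤ C * x ^ 2 * ((b : ℝ) / s) ^ (2 * n) := by
  intro lam _
  obtain rfl : Mhat = mhat b s := funext hMhat
  set r : ℝ := b / s
  have hr0 : 0 < r := div_pos (by exact_mod_cast (by omega : 0 < b))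
    (by exact_mod_cast (by omega : 0 < s))
  have hr1 : r < 1 := (div_lt_one (by exact_mod_cast (by omega : 0 < s))).mpr
    (by exact_mod_cast hbs)
  obtain ⟨C, hC, hiter⟩ := exists_iterate_mul_pow_le_add_sq hr0 hr1 (by positivity)
    (mhat_monotoneOn b s) (fun y => le_mhat (by omega) hbs.le) (fun y => mhat_le b s) lam
  refine ⟨C, hC, fun x hx hxl N n hnN => ?_⟩
  obtain ⟨k, rfl⟩ := Nat.exists_eq_add_of_le hnN
  have hxn : x * r ^ n ≤ lam :=
    (mul_le_of_le_one_right hx (pow_le_one₀ hr0.le hr1.le)).trans hxl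
  have := hiter k _ (by positivity) hxn
  rw [Nat.add_sub_cancel_left, pow_add, ← mul_assoc,
    show C * x ^ 2 * r ^ (2 * n) = C * (x * r ^ n) ^ 2 by ring]
  linarith
end

section
/- Let b and s be integers with 2 ≤ b < s, let r > 0 and N ∈ ℕ, and let (ω_a)_{a∈E_N} be i.i.d. standard Gaussian random variables. Set X_a := exp(√r·(b/s)^{N/2}·ω_a − (r/2)·(b/s)^N) for each a ∈ E_N, and let W := 𝐖_N((X_a)_{a∈E_N}). Then the fractional moment satisfies E[W^{1/2}] ≤ exp((1 − √r)/2). -/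
open Filter MeasureTheory ProbabilityTheory

/-- The edge set of the `n`-th diamond graph with branching number `b` and
segment number `s`: `E_n = ({1,…,b}×{1,…,s})^n`. -/
abbrev DiamondEdge (b s n : ℕ) := Fin n → Fin b × Fin s

/-- The recursively defined path average `𝐖_n` of edge weights on the diamond graph:
`𝐖_0(X) = X` and
`𝐖_n((X_a)) = (1/b)·Σ_{i=1}^b ∏_{j=1}^s 𝐖_{n−1}((X_{((i,j),a')})_{a'})`. -/
noncomputable def polyW (b s : ℕ) : (n : ℕ) → (DiamondEdge b s n → ℝ) → ℝ
  | 0, X => X finZeroElim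
  | n + 1, X =>
      (1 / (b : ℝ)) * ∑ i : Fin b, ∏ j : Fin s,
        polyW b s n (fun a => X (Fin.cons (i, j) a))

/-!
A path of the diamond graph has `s ^ N` of its `(b * s) ^ N` edges, and `W` is the average over
paths `p` of `∏_{a ∈ p} X_a`. Write `σ = √r (b/s)^{N/2}`, so that `X_a = exp(σ ω_a - σ²/2)`, and
factor `W = P · Q` with `Q = exp(c Σ_a ω_a)`, the sum running over all edges. Then `P` is an
average of exponentials of linear forms in the Gaussians, hence both factors have explicit means:
`E Q = exp((b s)^N c²/2)` and `E P = exp(-s^N σ c + (b s)^N c²/2)`. The choice `(b s)^N c² = 1`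
gives `s^N σ c = √r`, so `E Q = e^{1/2}` and `E P = e^{1/2 - √r}`, and the AM-GM bound
`√(P Q) ≤ (τ P + τ⁻¹ Q)/2` with `τ = e^{√r/2}` yields `E √W ≤ e^{(1 - √r)/2}`.
-/

-- The path set `Γ_n`: a branch `i`, then a path through each of the `s` copies of the
-- `(n - 1)`-th graph placed in series on that branch.
def DiamondPath (b s : ℕ) : ℕ → Type
  | 0 => PUnit
  | n + 1 => Fin b × (Fin s → DiamondPath b s n)

namespace DiamondPath

variable {b s : ℕ}

instance instFintype : (n : ℕ) → Fintype (DiamondPath b s n)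
  | 0 => inferInstanceAs (Fintype PUnit)
  | n + 1 => letI := instFintype n; inferInstanceAs (Fintype (Fin b × (Fin s → DiamondPath b s n)))

def edges : {n : ℕ} → DiamondPath b s n → Finset (DiamondEdge b s n)
  | 0, _ => Finset.univ
  | _ + 1, p => {a | (a 0).1 = p.1 ∧ Fin.tail a ∈ edges (p.2 (a 0).2)}

theorem card_succ (n : ℕ) :
    Fintype.card (DiamondPath b s (n + 1)) = b * Fintype.card (DiamondPath b s n) ^ s := by
  change Fintype.card (Fin b × (Fin s → DiamondPath b s n)) = _
  rw [Fintype.card_prod, Fintype.card_fun, Fintype.card_fin, Fintype.card_fin]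

theorem card_pos (hb : b ≠ 0) : ∀ n, 0 < Fintype.card (DiamondPath b s n)
  | 0 => Fintype.card_pos_iff.mpr ⟨PUnit.unit⟩
  | n + 1 => by
    rw [card_succ]
    exact Nat.mul_pos (Nat.pos_of_ne_zero hb) (pow_pos (card_pos hb n) s)

theorem mem_edges_succ {n : ℕ} {p : DiamondPath b s (n + 1)} {a : DiamondEdge b s (n + 1)} :
    a ∈ p.edges ↔ (a 0).1 = p.1 ∧ Fin.tail a ∈ (p.2 (a 0).2).edges := by
  simp [edges]

theorem cons_mem_edges_succ {n : ℕ} {p : DiamondPath b s (n + 1)} {x : Fin b × Fin s}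
    {a : DiamondEdge b s n} : Fin.cons x a ∈ p.edges ↔ x.1 = p.1 ∧ a ∈ (p.2 x.2).edges := by
  simp [mem_edges_succ]

@[to_additive]
theorem prod_edges_succ {M : Type*} [CommMonoid M] {n : ℕ} (p : DiamondPath b s (n + 1))
    (g : DiamondEdge b s (n + 1) → M) :
    ∏ a ∈ p.edges, g a = ∏ j, ∏ a' ∈ (p.2 j).edges, g (Fin.cons (p.1, j) a') := by
  rw [Finset.prod_sigma']
  have hcons : ∀ a ∈ p.edges, Fin.cons (p.1, (a 0).2) (Fin.tail a) = a := fun a ha => by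
    rw [← (mem_edges_succ.mp ha).1]
    exact Fin.cons_self_tail a
  refine Finset.prod_bij' (fun a _ => ⟨(a 0).2, Fin.tail a⟩) (fun x _ => Fin.cons (p.1, x.1) x.2)
    (fun a ha => ?_) (fun x hx => ?_) (fun a ha => hcons a ha) (fun x _ => ?_)
    (fun a ha => by rw [hcons a ha])
  · simpa using (mem_edges_succ.mp ha).2
  · simpa [cons_mem_edges_succ] using hx
  · simp

theorem card_edges : ∀ {n : ℕ} (p : DiamondPath b s n), p.edges.card = s ^ n
  | 0, _ => by simp [edges]
  | n + 1, p => by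
    rw [Finset.card_eq_sum_ones, sum_edges_succ]
    simp [card_edges, pow_succ']

end DiamondPath

open DiamondPath in
theorem card_diamondPath_mul_polyW {b s : ℕ} (hb : b ≠ 0) :
    ∀ {n : ℕ} (X : DiamondEdge b s n → ℝ),
      (Fintype.card (DiamondPath b s n) : ℝ) * polyW b s n X
        = ∑ p : DiamondPath b s n, ∏ a ∈ p.edges, X a
  | 0, X => by
    change (Fintype.card PUnit : ℝ) * X finZeroElim = ∑ p : PUnit, ∏ a ∈ Finset.univ, X a
    simp [Subsingleton.elim finZeroElim (default : DiamondEdge b s 0)]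
  | n + 1, X => calc
    _ = ∑ i, ∏ j, (Fintype.card (DiamondPath b s n) : ℝ)
          * polyW b s n (fun a => X (Fin.cons (i, j) a)) := by
      rw [card_succ, polyW]
      simp only [Finset.prod_mul_distrib, Finset.prod_const, Finset.card_univ, Fintype.card_fin,
        ← Finset.mul_sum]
      field_simp
      push_cast
      ring
    _ = ∑ i, ∏ j, ∑ q : DiamondPath b s n, ∏ a' ∈ q.edges, X (Fin.cons (i, j) a') := by
      simp only [card_diamondPath_mul_polyW hb]
    _ = ∑ p : Fin b × (Fin s → DiamondPath b s n),
          ∏ j, ∏ a' ∈ (p.2 j).edges, X (Fin.cons (p.1, j) a') := by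
      simp only [Finset.prod_univ_sum, Fintype.piFinset_univ, Fintype.sum_prod_type]
    _ = _ := by
      simp only [prod_edges_succ]
      rfl

theorem polyW_eq_inv_card_mul_sum {b s n : ℕ} (hb : b ≠ 0) (X : DiamondEdge b s n → ℝ) :
    polyW b s n X
      = (Fintype.card (DiamondPath b s n) : ℝ)⁻¹ * ∑ p : DiamondPath b s n, ∏ a ∈ p.edges, X a :=
  (eq_inv_mul_iff_mul_eq₀ (Nat.cast_ne_zero.mpr (DiamondPath.card_pos hb n).ne')).mpr
    (card_diamondPath_mul_polyW hb X)

noncomputable def tiltedPathAverage (b s : ℕ) {n : ℕ} (σ c : ℝ) (w : DiamondEdge b s n → ℝ) : ℝ :=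
  (Fintype.card (DiamondPath b s n) : ℝ)⁻¹ *
    ∑ p : DiamondPath b s n, Real.exp (∑ a, ((if a ∈ p.edges then σ else 0) - c) * w a)

theorem polyW_exp_eq_tiltedPathAverage_mul {b s n : ℕ} (hb : b ≠ 0) (σ c : ℝ)
    (w : DiamondEdge b s n → ℝ) :
    polyW b s n (fun a => Real.exp (σ * w a - σ ^ 2 / 2))
      = Real.exp (-(s ^ n * (σ ^ 2 / 2))) * tiltedPathAverage b s σ c w
        * Real.exp (∑ a, c * w a) := by
  have hpath : ∀ p : DiamondPath b s n, ∏ a ∈ p.edges, Real.exp (σ * w a - σ ^ 2 / 2)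
      = Real.exp (-(s ^ n * (σ ^ 2 / 2)))
        * Real.exp (∑ a, ((if a ∈ p.edges then σ else 0) - c) * w a)
        * Real.exp (∑ a, c * w a) := fun p => by
    rw [← Real.exp_sum, ← Real.exp_add, ← Real.exp_add]
    congr 1
    simp only [Finset.sum_sub_distrib, sub_mul, ite_mul, zero_mul, Finset.sum_ite_mem,
      Finset.univ_inter, Finset.sum_const, DiamondPath.card_edges, nsmul_eq_mul]
    push_cast
    ring
  rw [polyW_eq_inv_card_mul_sum hb, tiltedPathAverage, Finset.sum_congr rfl fun p _ => hpath p,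
    ← Finset.sum_mul, ← Finset.mul_sum]
  ring

theorem tiltedPathAverage_nonneg {b s n : ℕ} (σ c : ℝ) (w : DiamondEdge b s n → ℝ) :
    0 ≤ tiltedPathAverage b s σ c w := by
  unfold tiltedPathAverage
  positivity

theorem Real.sqrt_mul_le_add_div_two {x y : ℝ} (hx : 0 ≤ x) (hy : 0 ≤ y) {τ : ℝ} (hτ : 0 < τ) :
    √(x * y) ≤ (τ * x + τ⁻¹ * y) / 2 := by
  have h : √(x * y) = √(τ * x) * √(τ⁻¹ * y) := by
    rw [← Real.sqrt_mul (by positivity)]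
    congr 1
    field_simp
  rw [h]
  nlinarith [sq_nonneg (√(τ * x) - √(τ⁻¹ * y)), Real.sq_sqrt (by positivity : 0 ≤ τ * x),
    Real.sq_sqrt (by positivity : 0 ≤ τ⁻¹ * y)]

theorem MeasureTheory.integral_sqrt_mul_le {Ω : Type*} [MeasurableSpace Ω] {μ : Measure Ω}
    {f g : Ω → ℝ} (hf : Integrable f μ) (hg : Integrable g μ) (hf0 : 0 ≤ f) (hg0 : 0 ≤ g)
    {τ : ℝ} (hτ : 0 < τ) :
    ∫ x, √(f x * g x) ∂μ ≤ (τ * ∫ x, f x ∂μ + τ⁻¹ * ∫ x, g x ∂μ) / 2 := by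
  have hint : Integrable (fun x => (τ * f x + τ⁻¹ * g x) / 2) μ :=
    ((hf.const_mul τ).add (hg.const_mul τ⁻¹)).div_const 2
  calc ∫ x, √(f x * g x) ∂μ ≤ ∫ x, (τ * f x + τ⁻¹ * g x) / 2 ∂μ :=
        integral_mono_of_nonneg (.of_forall fun x => Real.sqrt_nonneg _) hint
          (.of_forall fun x => Real.sqrt_mul_le_add_div_two (hf0 x) (hg0 x) hτ)
    _ = _ := by
      rw [integral_div, integral_add (hf.const_mul τ) (hg.const_mul τ⁻¹), integral_const_mul,
        integral_const_mul]

section Gaussian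

variable {Ω : Type*} [MeasurableSpace Ω] {μ : Measure Ω}

section

variable {ι : Type*} [Fintype ι] {ω : ι → Ω → ℝ}

theorem ProbabilityTheory.iIndepFun.integrable_exp_sum_mul_of_gaussianReal
    (hindep : iIndepFun ω μ) (hmeas : ∀ a, Measurable (ω a)) {m : ι → ℝ} {v : ι → NNReal}
    (hlaw : ∀ a, μ.map (ω a) = gaussianReal (m a) (v a)) (t : ι → ℝ) :
    Integrable (fun x => Real.exp (∑ a, t a * ω a x)) μ := by
  have := hindep.isProbabilityMeasure
  have hint : ∀ a, Integrable (fun x => Real.exp (1 * (t a * ω a x))) μ := fun a => by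
    simpa only [one_mul, ← mgf_pos_iff, mgf_gaussianReal (hlaw a)] using Real.exp_pos _
  simpa [Finset.sum_apply] using
    (hindep.comp (fun a y => t a * y) fun a => measurable_const_mul (t a)).integrable_exp_mul_sum
      (fun a => (hmeas a).const_mul (t a)) (s := Finset.univ) fun a _ => hint a

theorem ProbabilityTheory.iIndepFun.integral_exp_sum_mul_of_gaussianReal
    (hindep : iIndepFun ω μ) (hmeas : ∀ a, Measurable (ω a)) {m : ι → ℝ} {v : ι → NNReal}
    (hlaw : ∀ a, μ.map (ω a) = gaussianReal (m a) (v a)) (t : ι → ℝ) :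
    ∫ x, Real.exp (∑ a, t a * ω a x) ∂μ = Real.exp (∑ a, (m a * t a + v a * t a ^ 2 / 2)) := by
  have h := (hindep.comp (fun a y => t a * y) fun a => measurable_const_mul (t a)).mgf_sum
    (fun a => (hmeas a).const_mul (t a)) Finset.univ (t := 1)
  simp only [mgf, Finset.sum_apply, Function.comp_apply, one_mul] at h
  rw [h, Real.exp_sum]
  exact Finset.prod_congr rfl fun a _ => mgf_gaussianReal (hlaw a) (t a)

end

variable {b s n : ℕ} {ω : DiamondEdge b s n → Ω → ℝ}

theorem ProbabilityTheory.iIndepFun.integrable_tiltedPathAverage (hindep : iIndepFun ω μ)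
    (hmeas : ∀ a, Measurable (ω a)) {m : DiamondEdge b s n → ℝ} {v : DiamondEdge b s n → NNReal}
    (hlaw : ∀ a, μ.map (ω a) = gaussianReal (m a) (v a)) (σ c : ℝ) :
    Integrable (fun x => tiltedPathAverage b s σ c (fun a => ω a x)) μ :=
  (integrable_finsetSum _ fun _ _ =>
    hindep.integrable_exp_sum_mul_of_gaussianReal hmeas hlaw _).const_mul _

theorem ProbabilityTheory.iIndepFun.integral_tiltedPathAverage (hb : b ≠ 0)
    (hindep : iIndepFun ω μ) (hmeas : ∀ a, Measurable (ω a))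
    (hlaw : ∀ a, μ.map (ω a) = gaussianReal 0 1) (σ c : ℝ) :
    ∫ x, tiltedPathAverage b s σ c (fun a => ω a x) ∂μ
      = Real.exp (s ^ n * (σ ^ 2 / 2 - σ * c) + (b * s) ^ n * (c ^ 2 / 2)) := by
  have hpath : ∀ p : DiamondPath b s n,
      ∫ x, Real.exp (∑ a, ((if a ∈ p.edges then σ else 0) - c) * ω a x) ∂μ
        = Real.exp (s ^ n * (σ ^ 2 / 2 - σ * c) + (b * s) ^ n * (c ^ 2 / 2)) := fun p => by
    rw [hindep.integral_exp_sum_mul_of_gaussianReal hmeas hlaw]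
    have hsq : ∀ a, (0 : ℝ) * ((if a ∈ p.edges then σ else 0) - c)
          + ((1 : NNReal) : ℝ) * ((if a ∈ p.edges then σ else 0) - c) ^ 2 / 2
        = (if a ∈ p.edges then σ ^ 2 / 2 - σ * c else 0) + c ^ 2 / 2 := fun a => by
      split_ifs <;> simp only [NNReal.coe_one] <;> ring
    simp only [hsq, Finset.sum_add_distrib, Finset.sum_ite_mem, Finset.univ_inter,
      Finset.sum_const, DiamondPath.card_edges, Finset.card_univ, Fintype.card_pi,
      Fintype.card_prod, Fintype.card_fin, Finset.prod_const, nsmul_eq_mul]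
    push_cast
    ring_nf
  have hcard : (Fintype.card (DiamondPath b s n) : ℝ) ≠ 0 :=
    Nat.cast_ne_zero.mpr (DiamondPath.card_pos hb n).ne'
  simp only [tiltedPathAverage]
  rw [integral_const_mul, integral_finsetSum _ fun _ _ =>
      hindep.integrable_exp_sum_mul_of_gaussianReal hmeas hlaw _,
    Finset.sum_congr rfl fun p _ => hpath p, Finset.sum_const, Finset.card_univ, nsmul_eq_mul,
    ← mul_assoc, inv_mul_cancel₀ hcard, one_mul]

theorem ProbabilityTheory.iIndepFun.integral_sqrt_polyW_le (hb : b ≠ 0)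
    (hindep : iIndepFun ω μ) (hmeas : ∀ a, Measurable (ω a))
    (hlaw : ∀ a, μ.map (ω a) = gaussianReal 0 1) (σ c : ℝ) {τ : ℝ} (hτ : 0 < τ) :
    ∫ x, √(polyW b s n (fun a => Real.exp (σ * ω a x - σ ^ 2 / 2))) ∂μ
      ≤ (τ * Real.exp (-(s ^ n * σ * c) + (b * s) ^ n * (c ^ 2 / 2))
          + τ⁻¹ * Real.exp ((b * s) ^ n * (c ^ 2 / 2))) / 2 := by
  have hQ : ∫ x, Real.exp (∑ a, c * ω a x) ∂μ = Real.exp ((b * s) ^ n * (c ^ 2 / 2)) := by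
    rw [hindep.integral_exp_sum_mul_of_gaussianReal hmeas hlaw]
    simp
  simp_rw [polyW_exp_eq_tiltedPathAverage_mul hb σ c]
  refine (integral_sqrt_mul_le
    ((hindep.integrable_tiltedPathAverage hmeas hlaw σ c).const_mul _)
    (hindep.integrable_exp_sum_mul_of_gaussianReal hmeas hlaw _)
    (fun x => mul_nonneg (Real.exp_pos _).le (tiltedPathAverage_nonneg σ c _))
    (fun x => (Real.exp_pos _).le) hτ).trans_eq ?_
  rw [integral_const_mul, hindep.integral_tiltedPathAverage hb hmeas hlaw, hQ, ← Real.exp_add]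
  ring_nf

end Gaussian

theorem stmt15_general (b s : ℕ) (hb : 2 ≤ b) (hbs : b < s)
    (r : ℝ) (hr : 0 < r) (N : ℕ)
    {Ω : Type*} [MeasurableSpace Ω] (μ : Measure Ω)
    (omega : DiamondEdge b s N → Ω → ℝ)
    (hmeas : ∀ a, Measurable (omega a))
    (hindep : iIndepFun omega μ)
    (hlaw : ∀ a, μ.map (omega a) = gaussianReal 0 1)
    (X : DiamondEdge b s N → Ω → ℝ)
    (hX : ∀ a ω', X a ω' =
      Real.exp (Real.sqrt r * Real.sqrt (((b : ℝ) / s) ^ N) * omega a ω'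
        - (r / 2) * ((b : ℝ) / s) ^ N)) :
    ∫ ω', Real.sqrt (polyW b s N (fun a => X a ω')) ∂μ
      ≤ Real.exp ((1 - Real.sqrt r) / 2) := by
  have hb0 : (0 : ℝ) < b := by exact_mod_cast (by omega : 0 < b)
  have hs0 : (0 : ℝ) < s := by exact_mod_cast (by omega : 0 < s)
  set σ := √r * √(((b : ℝ) / s) ^ N) with hσ_def
  have hσ : 0 < σ := by positivity
  have hσ2 : σ ^ 2 = r * ((b : ℝ) / s) ^ N := by
    rw [hσ_def, mul_pow, Real.sq_sqrt hr.le, Real.sq_sqrt (by positivity)]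
  have hXσ : ∀ x, (fun a => X a x) = fun a => Real.exp (σ * omega a x - σ ^ 2 / 2) := by
    intro x
    funext a
    rw [hX, hσ2]
    ring_nf
  set c := √r / (s ^ N * σ) with hc_def
  have hσc : s ^ N * σ * c = √r := by
    rw [hc_def]
    field_simp
  have hc2 : (b * s) ^ N * (c ^ 2 / 2) = (1 / 2 : ℝ) := by
    simp only [hc_def, div_pow, mul_pow, hσ2, Real.sq_sqrt hr.le]
    field_simp
  simp_rw [hXσ]
  refine (hindep.integral_sqrt_polyW_le (by omega) hmeas hlaw σ c
    (Real.exp_pos (√r / 2))).trans_eq ?_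
  rw [hσc, hc2, ← Real.exp_neg, ← Real.exp_add, ← Real.exp_add]
  ring_nf

/-- For `2 ≤ b < s`, `r > 0`, i.i.d. standard Gaussians
`(ω_a)_{a ∈ E_N}`, the weights `X_a = exp(√r (b/s)^{N/2} ω_a − (r/2)(b/s)^N)` and
`W = 𝐖_N((X_a))` satisfy `E[W^{1/2}] ≤ exp((1−√r)/2)`. -/
theorem stmt15 (b s : ℕ) (hb : 2 ≤ b) (hbs : b < s)
    (r : ℝ) (hr : 0 < r) (N : ℕ)
    {Ω : Type*} [MeasurableSpace Ω] (μ : Measure Ω) [IsProbabilityMeasure μ]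
    (omega : DiamondEdge b s N → Ω → ℝ)
    (hmeas : ∀ a, Measurable (omega a))
    (hindep : iIndepFun omega μ)
    (hlaw : ∀ a, μ.map (omega a) = gaussianReal 0 1)
    (X : DiamondEdge b s N → Ω → ℝ)
    (hX : ∀ a ω', X a ω' =
      Real.exp (Real.sqrt r * Real.sqrt (((b : ℝ) / s) ^ N) * omega a ω'
        - (r / 2) * ((b : ℝ) / s) ^ N)) :
    ∫ ω', Real.sqrt (polyW b s N (fun a => X a ω')) ∂μ
      ≤ Real.exp ((1 - Real.sqrt r) / 2) :=
  stmt15_general b s hb hbs r hr N μ omega hmeas hindep hlaw X hX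
end

section
/- Fix an integer b ≥ 2, κ_b := π√b/(√2·(b−1)), and β̂ ∈ (0, κ_b). Define M̂_n(x) := x + ((b−1)/(2n))·x² + β̂²(b−1)/(b·n) for x ≥ 0 and n ≥ 1, and define γ(x,y) := arctan((√b/(β̂√2))·x) + (β̂(b−1)/√(2b))·y. For ε > 0 let A_ε := {(x,m,n) ∈ [0,∞)×ℕ×ℕ : n ≥ 1 and γ(x, m/n) < π/2 − ε}. Then for every ε > 0 there is a constant C > 0 such that for all (x,m,n) ∈ A_ε, the derivative of the m-fold iterate satisfies (d/dx) M̂_n^m(x) ≤ C. -/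
/-!
`M̂_n` is the explicit Euler step `x ↦ x + a x² + e` of the Riccati equation `x' = a x² + e`,
with `a = (b-1)/(2n)`, `e = β̂²(b-1)/(bn)` and `a = e c²` for `c = √b / (β̂ √2)`. Along the exact
flow the angle `arctan (c x)` grows at constant speed `c e`, and by concavity of `arctan` the Euler
step does not outrun it: after `k` steps the angle is at most `arctan (c x) + k c e`, which for
`k ≤ m` is `γ(x, k/n) ≤ γ(x, m/n) < θ := π/2 - ε`. So the first `m` iterates stay below
`tan θ / c`, and the derivative `∏ₖ (1 + 2 a M̂_n^k x)` of the iterate is at most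
`exp (2 a m tan θ / c) ≤ exp (2 θ tan θ)`.
-/

open Real

theorem Real.arctan_sub_arctan_le {u v : ℝ} (hv : 0 ≤ v) (hvu : v ≤ u) :
    arctan u - arctan v ≤ (u - v) / (1 + v ^ 2) := by
  have hpos : 0 < 1 + u * v := by nlinarith
  have hz : 0 ≤ (u - v) / (1 + u * v) := div_nonneg (sub_nonneg.2 hvu) hpos.le
  calc arctan u - arctan v = arctan ((u - v) / (1 + u * v)) := by
        rw [sub_eq_add_neg, ← arctan_neg, arctan_add (by nlinarith)]
        congr 1
        ring
    _ ≤ (u - v) / (1 + u * v) := by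
      simpa only [tan_arctan] using le_tan (arctan_nonneg.2 hz) (arctan_lt_pi_div_two _)
    _ ≤ (u - v) / (1 + v ^ 2) :=
      div_le_div_of_nonneg_left (sub_nonneg.2 hvu) (by positivity) (by nlinarith)

theorem hasDerivAt_iterate_prod {𝕜 : Type*} [NontriviallyNormedField 𝕜] {f f' : 𝕜 → 𝕜}
    (hf : ∀ y, HasDerivAt f (f' y) y) (m : ℕ) (x : 𝕜) :
    HasDerivAt f^[m] (∏ k ∈ Finset.range m, f' (f^[k] x)) x := by
  induction m generalizing x with
  | zero => simpa using hasDerivAt_id x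
  | succ m ih =>
    rw [Finset.prod_range_succ', Function.iterate_succ]
    simpa only [Function.iterate_succ_apply, Function.iterate_zero_apply] using
      (ih (f x)).comp x (hf x)

def riccatiStep (a e y : ℝ) : ℝ := y + a * y ^ 2 + e

section riccatiStep

variable {a e c : ℝ}

theorem hasDerivAt_riccatiStep (a e y : ℝ) : HasDerivAt (riccatiStep a e) (1 + 2 * a * y) y :=
  (((hasDerivAt_id' y).add ((hasDerivAt_pow 2 y).const_mul a)).add_const e).congr_deriv (by ring)

theorem le_riccatiStep (ha : 0 ≤ a) (he : 0 ≤ e) (y : ℝ) : y ≤ riccatiStep a e y :=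
  le_add_of_le_of_nonneg (le_add_of_nonneg_right (by positivity)) he

theorem riccatiStep_iterate_nonneg (ha : 0 ≤ a) (he : 0 ≤ e) {x : ℝ} (hx : 0 ≤ x) (k : ℕ) :
    0 ≤ (riccatiStep a e)^[k] x := by
  induction k with
  | zero => exact hx
  | succ k ih =>
    rw [Function.iterate_succ_apply']
    exact ih.trans (le_riccatiStep ha he _)

theorem arctan_mul_riccatiStep_le (hace : a = e * c ^ 2) (he : 0 ≤ e) (hc : 0 ≤ c) {y : ℝ}
    (hy : 0 ≤ y) : arctan (c * riccatiStep a e y) ≤ arctan (c * y) + c * e := by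
  have ha : 0 ≤ a := hace ▸ by positivity
  have hstep := arctan_sub_arctan_le (mul_nonneg hc hy)
    (mul_le_mul_of_nonneg_left (le_riccatiStep ha he y) hc)
  have hslope : (c * riccatiStep a e y - c * y) / (1 + (c * y) ^ 2) = c * e := by
    rw [div_eq_iff (by positivity), riccatiStep, hace]
    ring
  linarith

theorem arctan_mul_riccatiStep_iterate_le (hace : a = e * c ^ 2) (he : 0 ≤ e) (hc : 0 ≤ c)
    {x : ℝ} (hx : 0 ≤ x) (k : ℕ) :
    arctan (c * (riccatiStep a e)^[k] x) ≤ arctan (c * x) + k * (c * e) := by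
  have ha : 0 ≤ a := hace ▸ by positivity
  induction k with
  | zero => simp
  | succ k ih =>
    rw [Function.iterate_succ_apply']
    have := arctan_mul_riccatiStep_le hace he hc (riccatiStep_iterate_nonneg ha he hx k)
    push_cast
    linarith

theorem riccatiStep_iterate_le_tan_div (hace : a = e * c ^ 2) (he : 0 ≤ e) (hc : 0 < c) {x θ : ℝ}
    (hx : 0 ≤ x) (hθ : θ < π / 2) {m : ℕ} (hm : arctan (c * x) + m * (c * e) ≤ θ) {k : ℕ}
    (hk : k ≤ m) : (riccatiStep a e)^[k] x ≤ tan θ / c := by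
  have hkm : (k : ℝ) * (c * e) ≤ m * (c * e) := by gcongr
  have hangle : arctan (c * (riccatiStep a e)^[k] x) ≤ θ := by
    linarith [arctan_mul_riccatiStep_iterate_le hace he hc.le hx k]
  rw [le_div_iff₀' hc, ← tan_arctan (c * _)]
  exact strictMonoOn_tan.monotoneOn ⟨neg_pi_div_two_lt_arctan _, arctan_lt_pi_div_two _⟩
    ⟨(neg_pi_div_two_lt_arctan _).trans_le hangle, hθ⟩ hangle

theorem deriv_riccatiStep_iterate_le (hace : a = e * c ^ 2) (he : 0 ≤ e) (hc : 0 < c) {x θ : ℝ}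
    (hx : 0 ≤ x) (hθ : θ < π / 2) {m : ℕ} (hm : arctan (c * x) + m * (c * e) ≤ θ) :
    deriv (riccatiStep a e)^[m] x ≤ exp (2 * θ * tan θ) := by
  have ha : 0 ≤ a := hace ▸ by positivity
  have hmθ : m * (c * e) ≤ θ := by
    linarith [arctan_nonneg.2 (mul_nonneg hc.le hx)]
  have htan : 0 ≤ tan θ :=
    tan_nonneg_of_nonneg_of_le_pi_div_two (le_trans (by positivity) hmθ) hθ.le
  rw [(hasDerivAt_iterate_prod (hasDerivAt_riccatiStep a e) m x).deriv]
  calc ∏ k ∈ Finset.range m, (1 + 2 * a * (riccatiStep a e)^[k] x)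
      ≤ exp (∑ k ∈ Finset.range m, 2 * a * (riccatiStep a e)^[k] x) :=
        prod_one_add_le_exp_sum _ fun k ↦ by
          have := riccatiStep_iterate_nonneg ha he hx k
          positivity
    _ ≤ exp (∑ _k ∈ Finset.range m, 2 * a * (tan θ / c)) := by
        gcongr with k hk
        exact riccatiStep_iterate_le_tan_div hace he hc hx hθ hm (Finset.mem_range.1 hk).le
    _ = exp (2 * (m * (c * e)) * tan θ) := by
        rw [Finset.sum_const, Finset.card_range, nsmul_eq_mul, hace]
        congr 1
        field_simp
    _ ≤ exp (2 * θ * tan θ) := by gcongr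

end riccatiStep

theorem stmt16_general (b : ℕ) (hb : 2 ≤ b)
    (beta : ℝ) (hbeta : 0 < beta)
    (Mhat : ℕ → ℝ → ℝ)
    (hMhat : ∀ n : ℕ, ∀ x : ℝ,
      Mhat n x = x + (((b : ℝ) - 1) / (2 * n)) * x ^ 2
        + beta ^ 2 * ((b : ℝ) - 1) / ((b : ℝ) * n))
    (gamma : ℝ → ℝ → ℝ)
    (hgamma : ∀ x y : ℝ,
      gamma x y = Real.arctan ((Real.sqrt b / (beta * Real.sqrt 2)) * x)
        + (beta * ((b : ℝ) - 1) / Real.sqrt (2 * b)) * y) :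
    ∀ ε : ℝ, 0 < ε → ∃ C : ℝ, 0 < C ∧
      ∀ (x : ℝ) (m n : ℕ), 0 ≤ x → 1 ≤ n →
        gamma x ((m : ℝ) / n) < Real.pi / 2 - ε →
        deriv (fun y : ℝ => (Mhat n)^[m] y) x ≤ C := by
  intro ε hε
  obtain ⟨θ, hθ, hεθ⟩ : ∃ θ, θ < π / 2 ∧ π / 2 - ε ≤ θ :=
    ⟨π / 2 - min ε (π / 4), by linarith [lt_min hε (by positivity : 0 < π / 4)],
      by linarith [min_le_left ε (π / 4)]⟩
  refine ⟨exp (2 * θ * tan θ), exp_pos _, fun x m n hx hn hγ ↦ ?_⟩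
  have hB : (2 : ℝ) ≤ b := by exact_mod_cast hb
  set c := √b / (beta * √2)
  set e := beta ^ 2 * ((b : ℝ) - 1) / ((b : ℝ) * n)
  have hc : 0 < c := by positivity
  have he : 0 ≤ e := div_nonneg (mul_nonneg (sq_nonneg _) (by linarith)) (by positivity)
  have hsqrt_sq : √(b : ℝ) ^ 2 = b := sq_sqrt (by positivity)
  have hace : ((b : ℝ) - 1) / (2 * n) = e * c ^ 2 := by
    simp only [e, c, div_pow, mul_pow, hsqrt_sq, sq_sqrt (by norm_num : (0 : ℝ) ≤ 2)]
    field_simp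
  have hangle : gamma x ((m : ℝ) / n) = arctan (c * x) + m * (c * e) := by
    rw [hgamma, sqrt_mul (by norm_num) (b : ℝ)]
    congr 1
    simp only [c, e]
    field_simp
    rw [hsqrt_sq]
    ring
  have hMhat_eq : Mhat n = riccatiStep (((b : ℝ) - 1) / (2 * n)) e :=
    funext fun y ↦ hMhat n y
  rw [hMhat_eq]
  exact deriv_riccatiStep_iterate_le hace he hc hx hθ (by linarith)

/-- For `b ≥ 2`, `κ_b = π√b/(√2(b−1))`, `β̂ ∈ (0, κ_b)`, the maps
`M̂_n(x) = x + ((b−1)/(2n))x² + β̂²(b−1)/(bn)` and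
`γ(x,y) = arctan((√b/(β̂√2))x) + (β̂(b−1)/√(2b))y`: for every `ε > 0` there is `C > 0`
such that whenever `x ≥ 0`, `n ≥ 1`, and `γ(x, m/n) < π/2 − ε`, the derivative of the
`m`-fold iterate satisfies `(M̂_n^[m])'(x) ≤ C`. -/
theorem stmt16 (b : ℕ) (hb : 2 ≤ b) (kappa : ℝ)
    (hkappa : kappa = Real.pi * Real.sqrt b / (Real.sqrt 2 * ((b : ℝ) - 1)))
    (beta : ℝ) (hbeta : 0 < beta) (hbetalt : beta < kappa)
    (Mhat : ℕ → ℝ → ℝ)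
    (hMhat : ∀ n : ℕ, ∀ x : ℝ,
      Mhat n x = x + (((b : ℝ) - 1) / (2 * n)) * x ^ 2
        + beta ^ 2 * ((b : ℝ) - 1) / ((b : ℝ) * n))
    (gamma : ℝ → ℝ → ℝ)
    (hgamma : ∀ x y : ℝ,
      gamma x y = Real.arctan ((Real.sqrt b / (beta * Real.sqrt 2)) * x)
        + (beta * ((b : ℝ) - 1) / Real.sqrt (2 * b)) * y) :
    ∀ ε : ℝ, 0 < ε → ∃ C : ℝ, 0 < C ∧
      ∀ (x : ℝ) (m n : ℕ), 0 ≤ x → 1 ≤ n →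
        gamma x ((m : ℝ) / n) < Real.pi / 2 - ε →
        deriv (fun y : ℝ => (Mhat n)^[m] y) x ≤ C :=
  stmt16_general b hb beta hbeta Mhat hMhat gamma hgamma
end

section
/- Fix an integer b ≥ 2, κ_b := π√b/(√2·(b−1)), and β̂ ∈ (0, κ_b). Define M̂_n(x) := x + ((b−1)/(2n))·x² + β̂²(b−1)/(b·n), γ(x,y) := arctan((√b/(β̂√2))·x) + (β̂(b−1)/√(2b))·y, and for ε > 0 let A_ε := {(x,m,n) ∈ [0,∞)×ℕ×ℕ : n ≥ 1 and γ(x, m/n) < π/2 − ε}. Then for every ε > 0 there is a constant C > 0 such that for all (x,m,n) ∈ A_ε, |M̂_n^m(x) − (β̂√2/√b)·tan( arctan((√b/(β̂√2))·x) + β̂·((b−1)/√(2b))·(m/n) )| ≤ C/n. -/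
open Real

/-! With `a = (b - 1) / 2` and `c = β̂² (b - 1) / b`, `M̂_n` is the explicit Euler step of size
`1 / n` for the Riccati equation `y' = a y² + c`, whose solution from `x` is
`p tan (arctan (x / p) + ω t)` with `p = β̂ √2 / √b`, `ω = β̂ (b - 1) / √(2b)`, i.e. `a p² = c = p ω`.
Convexity of `tan` keeps the Euler iterates below the exact solution, whose one-step defect is
`O(1/n²)` while the angle stays `ε` away from `π / 2`. There the Euler step is Lipschitz with
constant `1 + O(1/n)`, so a discrete Grönwall bound over the `O(n)` steps gives an error `O(1/n)`. -/

lemma tan_add_sub_tan_sub_div_cos_sq {θ h : ℝ} (hθ : cos θ ≠ 0) (hθh : cos (θ + h) ≠ 0) :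
    tan (θ + h) - tan θ - h / cos θ ^ 2
      = (sin h * cos θ - h * cos (θ + h)) / (cos θ ^ 2 * cos (θ + h)) := by
  rw [tan_eq_sin_div_cos, tan_eq_sin_div_cos, show sin h = sin (θ + h - θ) by ring_nf, sin_sub]
  field_simp

lemma tan_add_div_cos_sq_le_tan_add {θ h : ℝ} (hθ : 0 ≤ θ) (hh : 0 ≤ h) (hθh : θ + h < π / 2) :
    tan θ + h / cos θ ^ 2 ≤ tan (θ + h) := by
  have hcos : 0 < cos θ := cos_pos_of_mem_Ioo ⟨by linarith [pi_pos], by linarith⟩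
  have hcos' : 0 < cos (θ + h) := cos_pos_of_mem_Ioo ⟨by linarith [pi_pos], hθh⟩
  have hcos_h : 0 < cos h := cos_pos_of_mem_Ioo ⟨by linarith [pi_pos], by linarith⟩
  have hh_tan : h * cos h ≤ sin h := by
    have := le_tan hh (by linarith)
    rwa [tan_eq_sin_div_cos, le_div_iff₀ hcos_h] at this
  have hsinθ : 0 ≤ sin θ := sin_nonneg_of_nonneg_of_le_pi hθ (by linarith)
  have hsinh : 0 ≤ sin h := sin_nonneg_of_nonneg_of_le_pi hh (by linarith)
  have hnum : 0 ≤ sin h * cos θ - h * cos (θ + h) := by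
    have hsplit : sin h * cos θ - h * cos (θ + h)
        = cos θ * (sin h - h * cos h) + h * sin θ * sin h := by
      rw [cos_add]; ring
    rw [hsplit]
    have := sub_nonneg.2 hh_tan
    positivity
  have := tan_add_sub_tan_sub_div_cos_sq hcos.ne' hcos'.ne' ▸ div_nonneg hnum (by positivity)
  linarith

lemma tan_add_le_tan_add_div_cos_sq_add {θ h ε : ℝ} (hθ : 0 ≤ θ) (hh : 0 ≤ h) (hε : 0 < ε)
    (hθh : θ + h ≤ π / 2 - ε) :
    tan (θ + h) ≤ tan θ + h / cos θ ^ 2 + h ^ 2 / sin ε ^ 3 := by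
  have hsinε : 0 < sin ε := sin_pos_of_pos_of_lt_pi hε (by linarith [pi_pos])
  have hcos' : sin ε ≤ cos (θ + h) := by
    rw [← cos_pi_div_two_sub]
    exact cos_le_cos_of_nonneg_of_le_pi (by linarith) (by linarith [pi_pos]) hθh
  have hcos : cos (θ + h) ≤ cos θ :=
    cos_le_cos_of_nonneg_of_le_pi hθ (by linarith [pi_pos]) (by linarith)
  have hnum : sin h * cos θ - h * cos (θ + h) ≤ h ^ 2 := by
    have hsin : sin h * cos θ ≤ h * cos θ := mul_le_mul_of_nonneg_right (sin_le hh) (by linarith)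
    have hlip : cos θ - cos (θ + h) ≤ h := by
      simpa [abs_of_nonneg hh] using (le_abs_self _).trans (abs_cos_sub_cos_le θ (θ + h))
    nlinarith
  have hden : sin ε ^ 3 ≤ cos θ ^ 2 * cos (θ + h) := by
    calc sin ε ^ 3 = sin ε ^ 2 * sin ε := by ring
      _ ≤ cos θ ^ 2 * cos (θ + h) := by gcongr; linarith
  have := tan_add_sub_tan_sub_div_cos_sq (by linarith) (by linarith) ▸
    div_le_div₀ (by positivity) hnum (by positivity) hden
  linarith

lemma le_mul_mul_pow_of_le_mul_add {e : ℕ → ℝ} {q K : ℝ} {m : ℕ} (hq : 1 ≤ q) (hK : 0 ≤ K)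
    (h0 : e 0 ≤ 0) (hstep : ∀ k < m, e (k + 1) ≤ q * e k + K) : e m ≤ m * K * q ^ m := by
  induction m with
  | zero => simpa using h0
  | succ m ih =>
    have ih := ih fun k hk => hstep k (hk.trans m.lt_succ_self)
    calc e (m + 1) ≤ q * e m + K := hstep m m.lt_succ_self
      _ ≤ q * (m * K * q ^ m) + K * q ^ (m + 1) :=
          add_le_add (mul_le_mul_of_nonneg_left ih (by linarith))
            (le_mul_of_one_le_right hK (one_le_pow₀ hq))
      _ = (m + 1 : ℕ) * K * q ^ (m + 1) := by push_cast; ring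

def riccatiEuler (a c h z : ℝ) : ℝ := z + h * (a * z ^ 2 + c)

section riccatiEuler

variable {a c h p ω : ℝ}

lemma riccatiEuler_nonneg (ha : 0 ≤ a) (hc : 0 ≤ c) (hh : 0 ≤ h) {z : ℝ} (hz : 0 ≤ z) :
    0 ≤ riccatiEuler a c h z := by
  unfold riccatiEuler; positivity

lemma riccatiEuler_le_riccatiEuler (ha : 0 ≤ a) (hh : 0 ≤ h) {z w : ℝ} (hz : 0 ≤ z)
    (hzw : z ≤ w) : riccatiEuler a c h z ≤ riccatiEuler a c h w := by
  unfold riccatiEuler; gcongr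

lemma riccatiEuler_sub_riccatiEuler_le (ha : 0 ≤ a) (hh : 0 ≤ h) {z w B : ℝ}
    (hzw : z ≤ w) (hwB : w ≤ B) :
    riccatiEuler a c h w - riccatiEuler a c h z ≤ (1 + 2 * a * B * h) * (w - z) := by
  calc riccatiEuler a c h w - riccatiEuler a c h z = (1 + a * h * (w + z)) * (w - z) := by
        unfold riccatiEuler; ring
    _ ≤ (1 + a * h * (2 * B)) * (w - z) := by gcongr; linarith
    _ = (1 + 2 * a * B * h) * (w - z) := by ring

lemma riccatiEuler_mul_tan (hap : a * p ^ 2 = c) (hpω : p * ω = c) {θ : ℝ} (hθ : cos θ ≠ 0) :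
    riccatiEuler a c h (p * tan θ) = p * (tan θ + ω * h / cos θ ^ 2) := by
  have htan := one_add_tan_sq_mul_cos_sq_eq_one hθ
  unfold riccatiEuler
  field_simp
  linear_combination h * tan θ ^ 2 * cos θ ^ 2 * hap - h * hpω + h * c * htan

lemma riccatiEuler_mul_tan_le (hp : 0 ≤ p) (hap : a * p ^ 2 = c) (hpω : p * ω = c) {θ : ℝ}
    (hθ : 0 ≤ θ) (hωh : 0 ≤ ω * h) (hlt : θ + ω * h < π / 2) :
    riccatiEuler a c h (p * tan θ) ≤ p * tan (θ + ω * h) := by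
  have hcos : cos θ ≠ 0 := (cos_pos_of_mem_Ioo ⟨by linarith [pi_pos], by linarith⟩).ne'
  rw [riccatiEuler_mul_tan hap hpω hcos]
  exact mul_le_mul_of_nonneg_left (tan_add_div_cos_sq_le_tan_add hθ hωh hlt) hp

lemma mul_tan_le_riccatiEuler_mul_tan_add (hp : 0 ≤ p) (hap : a * p ^ 2 = c) (hpω : p * ω = c)
    {θ ε : ℝ} (hθ : 0 ≤ θ) (hωh : 0 ≤ ω * h) (hε : 0 < ε) (hle : θ + ω * h ≤ π / 2 - ε) :
    p * tan (θ + ω * h) ≤ riccatiEuler a c h (p * tan θ) + p * (ω * h) ^ 2 / sin ε ^ 3 := by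
  have hcos : cos θ ≠ 0 := (cos_pos_of_mem_Ioo ⟨by linarith [pi_pos], by linarith⟩).ne'
  rw [riccatiEuler_mul_tan hap hpω hcos]
  exact (mul_le_mul_of_nonneg_left (tan_add_le_tan_add_div_cos_sq_add hθ hωh hε hle) hp).trans_eq
    (by ring)

lemma iterate_riccatiEuler_mul_tan_le (ha : 0 ≤ a) (hc : 0 ≤ c) (hp : 0 ≤ p) (hω : 0 ≤ ω)
    (hh : 0 ≤ h) (hap : a * p ^ 2 = c) (hpω : p * ω = c) {θ₀ : ℝ} (hθ₀ : 0 ≤ θ₀) {m : ℕ}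
    (hm : θ₀ + ω * (m * h) < π / 2) :
    0 ≤ (riccatiEuler a c h)^[m] (p * tan θ₀) ∧
      (riccatiEuler a c h)^[m] (p * tan θ₀) ≤ p * tan (θ₀ + ω * (m * h)) := by
  induction m with
  | zero =>
    simpa using mul_nonneg hp (tan_nonneg_of_nonneg_of_le_pi_div_two hθ₀ (by simpa using hm.le))
  | succ m ih =>
    have hωh : 0 ≤ ω * h := mul_nonneg hω hh
    have hθ_succ : θ₀ + ω * ((m + 1 : ℕ) * h) = θ₀ + ω * (m * h) + ω * h := by push_cast; ring
    obtain ⟨hX, hXY⟩ := ih (by rw [hθ_succ] at hm; linarith)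
    rw [Function.iterate_succ_apply', hθ_succ]
    refine ⟨riccatiEuler_nonneg ha hc hh hX, ?_⟩
    calc riccatiEuler a c h ((riccatiEuler a c h)^[m] (p * tan θ₀))
        ≤ riccatiEuler a c h (p * tan (θ₀ + ω * (m * h))) :=
          riccatiEuler_le_riccatiEuler ha hh hX hXY
      _ ≤ p * tan (θ₀ + ω * (m * h) + ω * h) :=
          riccatiEuler_mul_tan_le hp hap hpω (by positivity) hωh (hθ_succ ▸ hm)

lemma mul_tan_sub_iterate_riccatiEuler_le (ha : 0 ≤ a) (hc : 0 ≤ c) (hp : 0 ≤ p) (hω : 0 ≤ ω)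
    (hh : 0 ≤ h) (hap : a * p ^ 2 = c) (hpω : p * ω = c) {θ₀ ε : ℝ} (hθ₀ : 0 ≤ θ₀) (hε : 0 < ε)
    {m : ℕ} (hm : θ₀ + ω * (m * h) ≤ π / 2 - ε) :
    p * tan (θ₀ + ω * (m * h)) - (riccatiEuler a c h)^[m] (p * tan θ₀)
      ≤ m * (p * (ω * h) ^ 2 / sin ε ^ 3) * (1 + 2 * a * (p * tan (π / 2 - ε)) * h) ^ m := by
  have hωh : 0 ≤ ω * h := mul_nonneg hω hh
  have hθ_nonneg : ∀ k : ℕ, 0 ≤ θ₀ + ω * (k * h) := fun k => by positivity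
  have hθ_le : ∀ k ≤ m, θ₀ + ω * (k * h) ≤ π / 2 - ε := fun k hk =>
    (by gcongr : θ₀ + ω * (k * h) ≤ θ₀ + ω * (m * h)).trans hm
  have hB : 0 ≤ tan (π / 2 - ε) :=
    tan_nonneg_of_nonneg_of_le_pi_div_two ((hθ_nonneg m).trans hm) (by linarith)
  apply le_mul_mul_pow_of_le_mul_add (e := fun k => p * tan (θ₀ + ω * (k * h)) -
    (riccatiEuler a c h)^[k] (p * tan θ₀))
  · have := mul_nonneg (mul_nonneg (mul_nonneg zero_le_two ha) (mul_nonneg hp hB)) hh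
    linarith
  · have hsin : 0 < sin ε := sin_pos_of_pos_of_lt_pi hε (by linarith [hθ_nonneg m, pi_pos])
    positivity
  · simp
  intro k hk
  have hθ_succ : θ₀ + ω * ((k + 1 : ℕ) * h) = θ₀ + ω * (k * h) + ω * h := by push_cast; ring
  have hθk := hθ_le k hk.le
  obtain ⟨hX, hXY⟩ := iterate_riccatiEuler_mul_tan_le ha hc hp hω hh hap hpω hθ₀
    (hθk.trans_lt (by linarith))
  have hYB : p * tan (θ₀ + ω * (k * h)) ≤ p * tan (π / 2 - ε) := by
    refine mul_le_mul_of_nonneg_left (strictMonoOn_tan.monotoneOn ⟨?_, ?_⟩ ⟨?_, ?_⟩ hθk) hp <;>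
      linarith [hθ_nonneg k, pi_pos]
  have hstep := mul_tan_le_riccatiEuler_mul_tan_add hp hap hpω (hθ_nonneg k) hωh hε
    (hθ_succ ▸ hθ_le (k + 1) hk)
  have hlip := riccatiEuler_sub_riccatiEuler_le (c := c) ha hh hXY hYB
  simp only [Function.iterate_succ_apply', hθ_succ]
  linarith

end riccatiEuler

theorem exists_abs_iterate_riccatiEuler_mul_tan_sub_le {a c p ω ε : ℝ} (hp : 0 < p) (hω : 0 < ω)
    (hap : a * p ^ 2 = c) (hpω : p * ω = c) (hε : 0 < ε) :
    ∃ C, 0 < C ∧ ∀ (h θ₀ : ℝ) (m : ℕ), 0 ≤ h → 0 ≤ θ₀ → θ₀ + ω * (m * h) ≤ π / 2 - ε →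
      |(riccatiEuler a c h)^[m] (p * tan θ₀) - p * tan (θ₀ + ω * (m * h))| ≤ C * h := by
  have hc : 0 < c := hpω ▸ mul_pos hp hω
  have ha : 0 < a := pos_of_mul_pos_left (hap ▸ hc) (sq_nonneg p)
  -- capping `ε` keeps `sin δ` and `tan (π / 2 - δ)` positive
  set δ := min ε (π / 4)
  have hδ : 0 < δ := lt_min hε (by positivity)
  have hsin : 0 < sin δ := sin_pos_of_pos_of_lt_pi hδ (by linarith [min_le_right ε (π / 4)])
  have htan : 0 < tan (π / 2 - δ) :=
    tan_pos_of_pos_of_lt_pi_div_two (by linarith [min_le_right ε (π / 4)]) (by linarith)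
  set B := p * tan (π / 2 - δ)
  set T := π / (2 * ω)
  set K := p * ω ^ 2 / sin δ ^ 3
  refine ⟨T * K * exp (2 * a * B * T), by positivity, fun h θ₀ m hh hθ₀ hm => ?_⟩
  have hmδ : θ₀ + ω * (m * h) ≤ π / 2 - δ := hm.trans (by linarith [min_le_left ε (π / 4)])
  have hmT : m * h ≤ T := by
    rw [le_div_iff₀ (by positivity)]
    nlinarith [mul_nonneg (Nat.cast_nonneg m) hh]
  obtain ⟨-, hXY⟩ := iterate_riccatiEuler_mul_tan_le ha.le hc.le hp.le hω.le hh hap hpω hθ₀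
    (hmδ.trans_lt (by linarith))
  have herr := mul_tan_sub_iterate_riccatiEuler_le ha.le hc.le hp.le hω.le hh hap hpω hθ₀ hδ hmδ
  have hpow : (1 + 2 * a * B * h) ^ m ≤ exp (2 * a * B * T) :=
    calc (1 + 2 * a * B * h) ^ m ≤ exp (2 * a * B * h) ^ m :=
          pow_le_pow_left₀ (by positivity) (by linarith [add_one_le_exp (2 * a * B * h)]) m
      _ = exp (2 * a * B * (m * h)) := by rw [← exp_nat_mul]; ring_nf
      _ ≤ exp (2 * a * B * T) := exp_le_exp.2 (by gcongr)
  rw [abs_sub_comm, abs_of_nonneg (sub_nonneg.2 hXY)]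
  calc _ ≤ m * (p * (ω * h) ^ 2 / sin δ ^ 3) * (1 + 2 * a * B * h) ^ m := herr
    _ = m * h * K * (1 + 2 * a * B * h) ^ m * h := by ring
    _ ≤ T * K * exp (2 * a * B * T) * h := by gcongr

theorem stmt17_general (b : ℕ) (hb : 2 ≤ b)
    (beta : ℝ) (hbeta : 0 < beta)
    (Mhat : ℕ → ℝ → ℝ)
    (hMhat : ∀ n : ℕ, ∀ x : ℝ,
      Mhat n x = x + (((b : ℝ) - 1) / (2 * n)) * x ^ 2
        + beta ^ 2 * ((b : ℝ) - 1) / ((b : ℝ) * n))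
    (gamma : ℝ → ℝ → ℝ)
    (hgamma : ∀ x y : ℝ,
      gamma x y = Real.arctan ((Real.sqrt b / (beta * Real.sqrt 2)) * x)
        + (beta * ((b : ℝ) - 1) / Real.sqrt (2 * b)) * y) :
    ∀ ε : ℝ, 0 < ε → ∃ C : ℝ, 0 < C ∧
      ∀ (x : ℝ) (m n : ℕ), 0 ≤ x → 1 ≤ n →
        gamma x ((m : ℝ) / n) < Real.pi / 2 - ε →
        |(Mhat n)^[m] x
          - (beta * Real.sqrt 2 / Real.sqrt b) *
            Real.tan (Real.arctan ((Real.sqrt b / (beta * Real.sqrt 2)) * x)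
              + beta * (((b : ℝ) - 1) / Real.sqrt (2 * b)) * ((m : ℝ) / n))|
          ≤ C / n := by
  intro ε hε
  have hb1 : (0 : ℝ) < b - 1 := by
    have : (2 : ℝ) ≤ b := by exact_mod_cast hb
    linarith
  have hb0 : (0 : ℝ) < b := by linarith
  have hsqrt_mul : √(2 * (b : ℝ)) = √2 * √b := sqrt_mul zero_le_two _
  have hsqb : √(b : ℝ) ^ 2 = b := sq_sqrt hb0.le
  have hsq2 : √(2 : ℝ) ^ 2 = 2 := sq_sqrt zero_le_two
  obtain ⟨C, hC, hbound⟩ := exists_abs_iterate_riccatiEuler_mul_tan_sub_le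
    (a := ((b : ℝ) - 1) / 2) (c := beta ^ 2 * ((b : ℝ) - 1) / b)
    (p := beta * √2 / √b) (ω := beta * (((b : ℝ) - 1) / √(2 * b)))
    (by positivity) (by positivity) (by field_simp; rw [hsqb, hsq2]; ring)
    (by rw [hsqrt_mul]; field_simp; rw [hsqb]) hε
  refine ⟨C, hC, fun x m n hx _ hγ => ?_⟩
  have hMn : Mhat n = riccatiEuler (((b : ℝ) - 1) / 2) (beta ^ 2 * ((b : ℝ) - 1) / b) (1 / n) :=
    funext fun z => by rw [hMhat, riccatiEuler]; field_simp; ring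
  have hx : beta * √2 / √b * tan (arctan (√b / (beta * √2) * x)) = x := by
    rw [tan_arctan]; field_simp
  have hθ₀ : 0 ≤ arctan (√b / (beta * √2) * x) := arctan_nonneg.2 (by positivity)
  have hm : (m : ℝ) / n = m * (1 / n) := by ring
  rw [hgamma, hm, mul_div_assoc beta] at hγ
  have := hbound (1 / n) _ m (by positivity) hθ₀ hγ.le
  rwa [hx, ← hm, ← div_eq_mul_one_div, ← hMn] at this

/-- For `b ≥ 2`, `κ_b = π√b/(√2(b−1))`, `β̂ ∈ (0, κ_b)`, the maps
`M̂_n(x) = x + ((b−1)/(2n))x² + β̂²(b−1)/(bn)` and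
`γ(x,y) = arctan((√b/(β̂√2))x) + (β̂(b−1)/√(2b))y`: for every `ε > 0` there is `C > 0`
such that whenever `x ≥ 0`, `n ≥ 1`, and `γ(x, m/n) < π/2 − ε`,
`|M̂_n^[m](x) − (β̂√2/√b)·tan(arctan((√b/(β̂√2))x) + β̂((b−1)/√(2b))(m/n))| ≤ C/n`. -/
theorem stmt17 (b : ℕ) (hb : 2 ≤ b) (kappa : ℝ)
    (hkappa : kappa = Real.pi * Real.sqrt b / (Real.sqrt 2 * ((b : ℝ) - 1)))
    (beta : ℝ) (hbeta : 0 < beta) (hbetalt : beta < kappa)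
    (Mhat : ℕ → ℝ → ℝ)
    (hMhat : ∀ n : ℕ, ∀ x : ℝ,
      Mhat n x = x + (((b : ℝ) - 1) / (2 * n)) * x ^ 2
        + beta ^ 2 * ((b : ℝ) - 1) / ((b : ℝ) * n))
    (gamma : ℝ → ℝ → ℝ)
    (hgamma : ∀ x y : ℝ,
      gamma x y = Real.arctan ((Real.sqrt b / (beta * Real.sqrt 2)) * x)
        + (beta * ((b : ℝ) - 1) / Real.sqrt (2 * b)) * y) :
    ∀ ε : ℝ, 0 < ε → ∃ C : ℝ, 0 < C ∧
      ∀ (x : ℝ) (m n : ℕ), 0 ≤ x → 1 ≤ n →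
        gamma x ((m : ℝ) / n) < Real.pi / 2 - ε →
        |(Mhat n)^[m] x
          - (beta * Real.sqrt 2 / Real.sqrt b) *
            Real.tan (Real.arctan ((Real.sqrt b / (beta * Real.sqrt 2)) * x)
              + beta * (((b : ℝ) - 1) / Real.sqrt (2 * b)) * ((m : ℝ) / n))|
          ≤ C / n :=
  stmt17_general b hb beta hbeta Mhat hMhat gamma hgamma
end

section
/- Fix an integer b ≥ 2 and set κ_b := π√b/(√2·(b−1)). Define M̃_n(x) := x + ((b−1)/(2n))·x² + ((b−1)(b−2)/(6n²))·x³ + κ_b²·(b−1)/(b·n) for x ≥ 0 and n ≥ 1. Then (log n / n)·M̃_n^n(0) → 6/(b+1) as n → ∞. -/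
/-!
Put `y = (b - 1) x / π`, `h = π / (2n)` and `β = (b + 1) / (3 (b - 1))`. Then `M̃_n` becomes
`y ↦ y + h (1 + y²) + (1 - β) h² y³`, an Euler step of `y' = 1 + y²` (solved by `tan`) plus
a cubic correction, so each step advances `arctan y` by `h` minus a small defect and after
`n` steps `arctan y_n = π / 2 - ε` with `ε` the sum of the defects. The defect of a step from `y`
is `β h² y + O(h² + h³ y²)`; since `arctan y_k ≤ k h` forces `y_k ≤ 1 / ((n - k) h)`, the
defects add up to at most `β h log n + O(h)`. Conversely, for `y ≥ 1` the defect dominates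
`β h (log y' - log y)` up to telescoping errors, so `ε ≥ β h log y_n - O(h)`. Since
`ε ≈ tan ε = 1 / y_n`, the two bounds give `h log n · y_n → 1 / β`, i.e.
`(log n / n) M̃_n^n(0) → 2 / ((b - 1) β) = 6 / (b + 1)`.
-/

open Filter Real Finset Topology

lemma arctan_le_self {x : ℝ} (hx : 0 ≤ x) : arctan x ≤ x := by
  simpa only [tan_arctan] using le_tan (arctan_nonneg.2 hx) (arctan_lt_pi_div_two x)

lemma div_one_add_sq_le_arctan {x : ℝ} (hx : 0 ≤ x) : x / (1 + x ^ 2) ≤ arctan x := by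
  have h := sin_le (by positivity : 0 ≤ 2 * arctan x)
  rw [sin_two_mul, sin_arctan, cos_arctan, mul_assoc, div_mul_div_comm, mul_one,
    ← sq, sq_sqrt (by positivity)] at h
  linarith

lemma arctan_sub_arctan {a b : ℝ} (h : 0 < 1 + a * b) :
    arctan b - arctan a = arctan ((b - a) / (1 + a * b)) := by
  have hlt : a * ((b - a) / (1 + a * b)) < 1 := by
    rw [mul_div_assoc', div_lt_one h]; nlinarith [sq_nonneg a]
  have hne : 1 - a * ((b - a) / (1 + a * b)) ≠ 0 := by linarith
  rw [sub_eq_iff_eq_add', arctan_add hlt, eq_comm]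
  congr 1
  rw [div_eq_iff hne]
  field_simp
  ring

lemma pi_div_two_sub_arctan_le_inv {y : ℝ} (hy : 0 < y) : π / 2 - arctan y ≤ y⁻¹ := by
  rw [← arctan_inv_of_pos hy]; exact arctan_le_self (inv_pos.2 hy).le

lemma le_inv_of_arctan_le {x t : ℝ} (ht : 0 < t) (h : arctan x ≤ π / 2 - t) :
    x ≤ t⁻¹ := by
  rcases le_or_gt x 0 with hx | hx
  · exact hx.trans (inv_pos.2 ht).le
  · exact (le_inv_comm₀ hx ht).2 (by linarith [pi_div_two_sub_arctan_le_inv hx])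

lemma inv_le_pi_div_two_sub_arctan_div_cos {y : ℝ} (hy : 0 < y) :
    y⁻¹ ≤ (π / 2 - arctan y) / cos (π / 2 - arctan y) := by
  have hε : 0 < π / 2 - arctan y := sub_pos.2 (arctan_lt_pi_div_two y)
  have hcos : 0 < cos (π / 2 - arctan y) := by
    rw [cos_pi_div_two_sub]
    exact sin_pos_of_pos_of_lt_pi (arctan_pos.2 hy)
      (by linarith [arctan_lt_pi_div_two y, pi_pos])
  calc y⁻¹ = sin (π / 2 - arctan y) / cos (π / 2 - arctan y) := by
        rw [← tan_eq_sin_div_cos, tan_pi_div_two_sub, tan_arctan]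
    _ ≤ _ := div_le_div_of_nonneg_right (sin_le hε.le) hcos.le

lemma sum_range_natCast_sub (g : ℝ → ℝ) (n : ℕ) :
    ∑ k ∈ range n, g ((n : ℝ) - k) = ∑ j ∈ range n, g ((j : ℝ) + 1) := by
  rw [← sum_range_reflect (fun j : ℕ => g ((j : ℝ) + 1)) n]
  refine sum_congr rfl fun k hk => ?_
  have hk := mem_range.1 hk
  rw [Nat.cast_sub (by omega), Nat.cast_sub (by omega)]
  push_cast
  ring_nf

lemma sum_range_inv_succ_le (n : ℕ) : ∑ j ∈ range n, ((j : ℝ) + 1)⁻¹ ≤ 1 + log n := by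
  simpa [harmonic] using harmonic_le_one_add_log n

lemma sum_range_inv_succ_sq_le (n : ℕ) : ∑ j ∈ range n, (((j : ℝ) + 1) ^ 2)⁻¹ ≤ 2 := by
  have := sum_Ioo_inv_sq_le (α := ℝ) 0 (n + 1)
  rw [← Finset.Ico_add_one_left_eq_Ioo, ← sum_Ico_add'] at this
  simpa using this

lemma tendsto_div_natCast_mul_log_add (c β C : ℝ) :
    Tendsto (fun n : ℕ => c / n * (β * log n + C)) atTop (𝓝 0) := by
  have hlog : Tendsto (fun n : ℕ => log (n : ℝ) / n) atTop (𝓝 0) :=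
    isLittleO_log_id_atTop.tendsto_div_nhds_zero.comp tendsto_natCast_atTop_atTop
  have := (hlog.const_mul (c * β)).add (tendsto_const_div_atTop_nhds_zero_nat (c * C))
  rw [mul_zero, add_zero] at this
  exact this.congr fun n => by ring

lemma tendsto_cos_pi_div_two_sub_arctan {c β C : ℝ} {y : ℕ → ℝ}
    (hupper : ∀ᶠ n : ℕ in atTop, π / 2 - arctan (y n) ≤ c / n * (β * log n + C)) :
    Tendsto (fun n => cos (π / 2 - arctan (y n))) atTop (𝓝 1) := by
  have hε : Tendsto (fun n => π / 2 - arctan (y n)) atTop (𝓝 0) :=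
    tendsto_of_tendsto_of_tendsto_of_le_of_le' tendsto_const_nhds
      (tendsto_div_natCast_mul_log_add c β C)
      (Eventually.of_forall fun n => (sub_pos.2 (arctan_lt_pi_div_two (y n))).le) hupper
  have := (continuous_cos.tendsto 0).comp hε
  rwa [cos_zero] at this

lemma log_sub_log_log_le_log {c β C x y : ℝ} (hc : 0 < c) (hβ : 0 < β) (hC : 0 ≤ C)
    (hx : 0 < x) (hlog : 1 ≤ log x) (hy : 0 < y) (hcos : 1 / 2 ≤ cos (π / 2 - arctan y))
    (hupper : π / 2 - arctan y ≤ c / x * (β * log x + C)) :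
    log x - log (log x) - log (2 * (β + C) * c) ≤ log y := by
  have hε := sub_pos.2 (arctan_lt_pi_div_two y)
  have hinv : y⁻¹ ≤ 2 * (β + C) * c * log x / x := by
    calc y⁻¹ ≤ (π / 2 - arctan y) / cos (π / 2 - arctan y) :=
          inv_le_pi_div_two_sub_arctan_div_cos hy
      _ ≤ 2 * (c / x * (β * log x + C)) := by
          rw [div_le_iff₀ (by linarith)]; nlinarith
      _ ≤ 2 * ((β + C) * c * log x / x) := by
          gcongr
          rw [div_mul_eq_mul_div, div_le_div_iff_of_pos_right hx]
          nlinarith [mul_le_mul_of_nonneg_left hlog (by positivity : 0 ≤ c * C)]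
      _ = 2 * (β + C) * c * log x / x := by ring
  have := log_le_log (inv_pos.2 hy) hinv
  rw [log_inv, log_div (by positivity) hx.ne', log_mul (by positivity) (by positivity)] at this
  linarith

lemma tendsto_inv_div_mul_log {c β C : ℝ} (hc : 0 < c) (hβ : 0 < β) (hC : 0 ≤ C)
    {y : ℕ → ℝ} (hpos : ∀ᶠ n in atTop, 0 < y n)
    (hupper : ∀ᶠ n : ℕ in atTop, π / 2 - arctan (y n) ≤ c / n * (β * log n + C))
    (hlower : ∀ᶠ n : ℕ in atTop, c / n * (β * log (y n) - C) ≤ π / 2 - arctan (y n)) :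
    Tendsto (fun n : ℕ => (y n)⁻¹ / (c / n * log n)) atTop (𝓝 β) := by
  set K := log (2 * (β + C) * c)
  have hL : Tendsto (fun n : ℕ => log (n : ℝ)) atTop atTop :=
    tendsto_log_atTop.comp tendsto_natCast_atTop_atTop
  have hLinv : Tendsto (fun n : ℕ => (log (n : ℝ))⁻¹) atTop (𝓝 0) :=
    tendsto_inv_atTop_zero.comp hL
  have hLL : Tendsto (fun n : ℕ => log (log (n : ℝ)) / log n) atTop (𝓝 0) :=
    isLittleO_log_id_atTop.tendsto_div_nhds_zero.comp hL
  have hcos := tendsto_cos_pi_div_two_sub_arctan hupper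
  have hlow : Tendsto (fun n : ℕ => β - (β * (log (log (n : ℝ)) / log n)
      + (β * K + C) * (log (n : ℝ))⁻¹)) atTop (𝓝 β) := by
    simpa using tendsto_const_nhds.sub ((hLL.const_mul β).add (hLinv.const_mul (β * K + C)))
  have hup : Tendsto (fun n : ℕ => (β + C * (log (n : ℝ))⁻¹) / cos (π / 2 - arctan (y n)))
      atTop (𝓝 β) := by
    have := ((tendsto_const_nhds (x := β)).add (hLinv.const_mul C)).div hcos one_ne_zero
    rwa [mul_zero, add_zero, div_one] at this
  refine tendsto_of_tendsto_of_tendsto_of_le_of_le' hlow hup ?_ ?_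
  · filter_upwards [eventually_gt_atTop 0, hpos, hL.eventually_ge_atTop 1, hupper, hlower,
      hcos.eventually (le_mem_nhds one_half_lt_one)] with n hn hy hL1 hup hlow hcos
    have hn : (0 : ℝ) < n := Nat.cast_pos.2 hn
    have hlogy := log_sub_log_log_le_log hc hβ hC hn hL1 hy hcos hup
    calc β - (β * (log (log n) / log n) + (β * K + C) * (log n)⁻¹)
        = (β * (log n - log (log n) - K) - C) / log n := by field_simp; ring
      _ ≤ (β * log (y n) - C) / log n := by gcongr
      _ = c / n * (β * log (y n) - C) / (c / n * log n) := by field_simp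
      _ ≤ (π / 2 - arctan (y n)) / (c / n * log n) := by gcongr
      _ ≤ (y n)⁻¹ / (c / n * log n) := by gcongr; exact pi_div_two_sub_arctan_le_inv hy
  · filter_upwards [eventually_gt_atTop 0, hpos, hL.eventually_ge_atTop 1, hupper,
      hcos.eventually (lt_mem_nhds zero_lt_one)] with n hn hy hL1 hup hcos
    have hn : (0 : ℝ) < n := Nat.cast_pos.2 hn
    calc (y n)⁻¹ / (c / n * log n)
        ≤ (π / 2 - arctan (y n)) / cos (π / 2 - arctan (y n)) / (c / n * log n) := by
          gcongr; exact inv_le_pi_div_two_sub_arctan_div_cos hy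
      _ = (π / 2 - arctan (y n)) / (c / n * log n) / cos (π / 2 - arctan (y n)) := by ring
      _ ≤ c / n * (β * log n + C) / (c / n * log n) / cos (π / 2 - arctan (y n)) := by gcongr
      _ = (β + C * (log n)⁻¹) / cos (π / 2 - arctan (y n)) := by field_simp

theorem tendsto_mul_log_mul_of_arctan_bounds {c β C : ℝ} (hc : 0 < c) (hβ : 0 < β)
    (hC : 0 ≤ C) {y : ℕ → ℝ} (hpos : ∀ᶠ n in atTop, 0 < y n)
    (hupper : ∀ᶠ n : ℕ in atTop, π / 2 - arctan (y n) ≤ c / n * (β * log n + C))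
    (hlower : ∀ᶠ n : ℕ in atTop, c / n * (β * log (y n) - C) ≤ π / 2 - arctan (y n)) :
    Tendsto (fun n : ℕ => c / n * log n * y n) atTop (𝓝 β⁻¹) := by
  refine ((tendsto_inv_div_mul_log hc hβ hC hpos hupper hlower).inv₀ hβ.ne').congr fun n => ?_
  rw [inv_div, div_eq_mul_inv, inv_inv]

def tanStep (h β a : ℝ) : ℝ := a + h * (1 + a ^ 2) + (1 - β) * h ^ 2 * a ^ 3

/-- `tan (arctan (tanStep h β a) - arctan a)`. -/
noncomputable def tanIncrement (h β a : ℝ) : ℝ :=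
  (tanStep h β a - a) / (1 + a * tanStep h β a)

noncomputable def arctanDefect (h β a : ℝ) : ℝ := h - (arctan (tanStep h β a) - arctan a)

section Step

variable {h β a : ℝ}

lemma add_le_tanStep (hh : 0 ≤ h) (hβ : β ≤ 1) (ha : 0 ≤ a) : a + h ≤ tanStep h β a := by
  have : 0 ≤ (1 - β) * h ^ 2 * a ^ 3 := by
    have : 0 ≤ 1 - β := by linarith
    positivity
  unfold tanStep; nlinarith [mul_nonneg hh (sq_nonneg a)]

lemma le_tanStep (hh : 0 ≤ h) (hβ : β ≤ 1) (ha : 0 ≤ a) : a ≤ tanStep h β a :=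
  (le_add_of_nonneg_right hh).trans (add_le_tanStep hh hβ ha)

lemma one_add_mul_tanStep_pos (hh : 0 ≤ h) (hβ : β ≤ 1) (ha : 0 ≤ a) :
    0 < 1 + a * tanStep h β a := by
  nlinarith [le_tanStep hh hβ ha, mul_nonneg ha ha]

lemma h_sub_tanIncrement (hh : 0 ≤ h) (hβ : β ≤ 1) (ha : 0 ≤ a) :
    h - tanIncrement h β a =
      h ^ 2 * a * (1 + β * a ^ 2 + (1 - β) * h * a ^ 3) / (1 + a * tanStep h β a) := by
  have hpos := one_add_mul_tanStep_pos hh hβ ha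
  rw [tanIncrement, eq_div_iff hpos.ne', sub_mul, div_mul_cancel₀ _ hpos.ne']
  unfold tanStep
  ring

lemma arctanDefect_eq (hh : 0 ≤ h) (hβ : β ≤ 1) (ha : 0 ≤ a) :
    arctanDefect h β a = h - arctan (tanIncrement h β a) := by
  rw [arctanDefect, arctan_sub_arctan (one_add_mul_tanStep_pos hh hβ ha), tanIncrement]

lemma tanIncrement_nonneg (hh : 0 ≤ h) (hβ : β ≤ 1) (ha : 0 ≤ a) :
    0 ≤ tanIncrement h β a :=
  div_nonneg (by linarith [le_tanStep hh hβ ha]) (one_add_mul_tanStep_pos hh hβ ha).le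

lemma tanIncrement_le (hh : 0 ≤ h) (hβ0 : 0 ≤ β) (hβ : β ≤ 1) (ha : 0 ≤ a) :
    tanIncrement h β a ≤ h := by
  have hpos := one_add_mul_tanStep_pos hh hβ ha
  have : 0 ≤ 1 - β := by linarith
  have : 0 ≤ h ^ 2 * a * (1 + β * a ^ 2 + (1 - β) * h * a ^ 3) / (1 + a * tanStep h β a) := by
    positivity
  linarith [h_sub_tanIncrement hh hβ ha]

lemma arctanDefect_nonneg (hh : 0 ≤ h) (hβ0 : 0 ≤ β) (hβ : β ≤ 1) (ha : 0 ≤ a) :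
    0 ≤ arctanDefect h β a := by
  rw [arctanDefect_eq hh hβ ha]
  linarith [arctan_le_self (tanIncrement_nonneg hh hβ ha), tanIncrement_le hh hβ0 hβ ha]

lemma arctanDefect_le (hh : 0 ≤ h) (hβ0 : 0 ≤ β) (hβ : β ≤ 1) (ha : 0 ≤ a) :
    arctanDefect h β a ≤ β * h ^ 2 * a + h ^ 2 + h ^ 3 * a ^ 2 + h ^ 3 := by
  set r := tanIncrement h β a
  have hr0 : 0 ≤ r := tanIncrement_nonneg hh hβ ha
  have hrh : r ≤ h := tanIncrement_le hh hβ0 hβ ha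
  have harctan : r - r ^ 3 ≤ arctan r := by
    have : r - r ^ 3 ≤ r / (1 + r ^ 2) := by
      rw [le_div_iff₀ (by positivity)]; nlinarith [pow_nonneg hr0 5]
    linarith [div_one_add_sq_le_arctan hr0]
  have hsub : h - r ≤ β * h ^ 2 * a + h ^ 2 + h ^ 3 * a ^ 2 := by
    have hβ' : 0 ≤ 1 - β := by linarith
    have hle : 1 + a ^ 2 ≤ 1 + a * tanStep h β a := by nlinarith [le_tanStep hh hβ ha]
    rw [h_sub_tanIncrement hh hβ ha]
    calc _ ≤ h ^ 2 * a * (1 + β * a ^ 2 + (1 - β) * h * a ^ 3) / (1 + a ^ 2) := by gcongr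
      _ ≤ _ := by
          rw [div_le_iff₀ (by positivity)]
          nlinarith [mul_nonneg (mul_nonneg hh hh) (sq_nonneg (a - 1)),
            mul_nonneg hβ0 (mul_nonneg (mul_nonneg hh hh) ha),
            mul_nonneg (mul_nonneg hβ' (pow_nonneg hh 3)) (pow_nonneg ha 2),
            mul_nonneg hβ0 (pow_nonneg hh 3), mul_nonneg (pow_nonneg hh 3) (pow_nonneg ha 4)]
  rw [arctanDefect_eq hh hβ ha]
  nlinarith [pow_le_pow_left₀ hr0 hrh 3]

lemma mul_cube_div_le_arctanDefect (hh : 0 ≤ h) (hβ : β ≤ 1) (ha : 0 ≤ a) :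
    β * h * (h * a ^ 3 / (1 + a * tanStep h β a)) ≤ arctanDefect h β a := by
  have hpos := one_add_mul_tanStep_pos hh hβ ha
  have hnum : β * h * (h * a ^ 3) ≤ h ^ 2 * a * (1 + β * a ^ 2 + (1 - β) * h * a ^ 3) := by
    have : 0 ≤ 1 - β := by linarith
    nlinarith [mul_nonneg (mul_nonneg this (pow_nonneg hh 3)) (pow_nonneg ha 4),
      mul_nonneg (pow_nonneg hh 2) ha]
  rw [arctanDefect_eq hh hβ ha, mul_div_assoc']
  calc _ ≤ h ^ 2 * a * (1 + β * a ^ 2 + (1 - β) * h * a ^ 3) / (1 + a * tanStep h β a) := by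
        gcongr
    _ = h - tanIncrement h β a := (h_sub_tanIncrement hh hβ ha).symm
    _ ≤ _ := by linarith [arctan_le_self (tanIncrement_nonneg hh hβ ha)]

lemma tanStep_le (hh : 0 ≤ h) (hβ0 : 0 ≤ β) (ha : 1 ≤ a) (hha : h * a ≤ 1 / 10) :
    tanStep h β a ≤ 3 / 2 * a := by
  have ha0 : 0 ≤ a := by linarith
  have h1 : h ≤ a / 10 := by nlinarith
  have h2 : h * a ^ 2 ≤ a / 10 := by nlinarith
  have h3 : (1 - β) * h ^ 2 * a ^ 3 ≤ a / 100 := by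
    have : h ^ 2 * a ^ 3 ≤ a / 100 := by nlinarith [mul_nonneg hh ha0]
    nlinarith [mul_nonneg (mul_nonneg hh hh) (pow_nonneg ha0 3)]
  unfold tanStep; nlinarith

lemma log_tanStep_sub_log_le (hh : 0 ≤ h) (hβ0 : 0 ≤ β) (hβ : β ≤ 1) (ha : 1 ≤ a)
    (hha : h * a ≤ 1 / 10) :
    log (tanStep h β a) - log a ≤
      h * a ^ 3 / (1 + a * tanStep h β a)
        + 2 * (h * (tanStep h β a - a) + (1 / a ^ 2 - 1 / tanStep h β a ^ 2)) := by
  set b := tanStep h β a with hb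
  have ha0 : 0 < a := by linarith
  have hab : a ≤ b := le_tanStep hh hβ ha0.le
  have hpos : 0 < 1 + a * b := one_add_mul_tanStep_pos hh hβ ha0.le
  have hsq : 0 ≤ 1 + a * b - a ^ 2 := by nlinarith
  have hba : h * a ^ 2 ≤ b - a := by
    have : 0 ≤ (1 - β) * h ^ 2 * a ^ 3 := by
      have : 0 ≤ 1 - β := by linarith
      positivity
    rw [hb]; unfold tanStep; nlinarith
  have hlog : log b - log a ≤ (b - a) / a := by
    have := log_le_sub_one_of_pos (div_pos (by linarith) ha0)
    rw [log_div (by linarith) ha0.ne'] at this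
    rwa [sub_div, div_self ha0.ne']
  have hsplit : (b - a) / a = h / a + h * a + (1 - β) * h ^ 2 * a ^ 2 := by
    rw [hb]; unfold tanStep; field_simp; ring
  have hha' : h * a = h * a ^ 3 / (1 + a * b) + h * a / (1 + a * b)
      + h * a ^ 2 * (b - a) / (1 + a * b) := by
    field_simp; ring
  have e1 : h * a / (1 + a * b) ≤ h / a := by
    rw [div_le_div_iff₀ hpos ha0]; nlinarith [mul_nonneg hh hsq]
  have e2 : h * a ^ 2 * (b - a) / (1 + a * b) ≤ h * (b - a) := by
    rw [div_le_iff₀ hpos]; nlinarith [mul_nonneg (mul_nonneg hh (sub_nonneg.2 hab)) hsq]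
  have e3 : (1 - β) * h ^ 2 * a ^ 2 ≤ h * (b - a) := by
    nlinarith [mul_le_mul_of_nonneg_left hba hh,
      mul_nonneg hβ0 (mul_nonneg (mul_nonneg hh hh) (sq_nonneg a))]
  have e4 : h / a ≤ 1 / a ^ 2 - 1 / b ^ 2 := by
    have hb32 := tanStep_le hh hβ0 ha hha
    have hb0 : 0 < b := by linarith
    rw [div_sub_div _ _ (by positivity) (by positivity), div_le_div_iff₀ ha0 (by positivity)]
    nlinarith [mul_le_mul_of_nonneg_left hba (by positivity : (0 : ℝ) ≤ a + b),
      mul_nonneg hh (mul_nonneg ha0.le (by nlinarith : (0 : ℝ) ≤ a * (a + b) - b ^ 2))]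
  linarith

lemma mul_log_tanStep_sub_log_le (hh : 0 ≤ h) (hβ0 : 0 ≤ β) (hβ : β ≤ 1) (ha : 1 ≤ a)
    (hha : h * a ≤ 1 / 10) :
    β * h * (log (tanStep h β a) - log a) ≤
      arctanDefect h β a
        + 2 * β * h * (h * (tanStep h β a - a) + (1 / a ^ 2 - 1 / tanStep h β a ^ 2)) := by
  have := mul_le_mul_of_nonneg_left (log_tanStep_sub_log_le hh hβ0 hβ ha hha)
    (by positivity : 0 ≤ β * h)
  nlinarith [mul_cube_div_le_arctanDefect hh hβ (by linarith : 0 ≤ a)]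

lemma one_add_tanStep_le (hh : 0 ≤ h) (hh1 : h ≤ 1) (hβ0 : 0 ≤ β) (ha : 0 ≤ a)
    (hha : h * a ≤ 1) : 1 + tanStep h β a ≤ 3 * (1 + a) := by
  have h1 : h * a ^ 2 ≤ a := by nlinarith
  have h2 : (1 - β) * h ^ 2 * a ^ 3 ≤ a := by
    have : (h * a) ^ 2 * a ≤ a := by
      nlinarith [mul_nonneg (mul_nonneg hh ha) ha, mul_nonneg hh ha]
    nlinarith [mul_nonneg hβ0 (mul_nonneg (sq_nonneg (h * a)) ha)]
  unfold tanStep; nlinarith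

end Step

def tanOrbit (h β : ℝ) (k : ℕ) : ℝ := (tanStep h β)^[k] 0

section Orbit

variable {h β : ℝ}

@[simp] lemma tanOrbit_zero : tanOrbit h β 0 = 0 := rfl

lemma tanOrbit_succ (k : ℕ) : tanOrbit h β (k + 1) = tanStep h β (tanOrbit h β k) :=
  Function.iterate_succ_apply' ..

lemma tanOrbit_nonneg (hh : 0 ≤ h) (hβ : β ≤ 1) (k : ℕ) : 0 ≤ tanOrbit h β k := by
  induction k with
  | zero => simp
  | succ k ih => rw [tanOrbit_succ]; exact ih.trans (le_tanStep hh hβ ih)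

lemma tanOrbit_pos (hh : 0 < h) (hβ : β ≤ 1) {k : ℕ} (hk : k ≠ 0) :
    0 < tanOrbit h β k := by
  obtain ⟨k, rfl⟩ := Nat.exists_eq_succ_of_ne_zero hk
  rw [tanOrbit_succ]
  linarith [add_le_tanStep hh.le hβ (tanOrbit_nonneg hh.le hβ k), tanOrbit_nonneg hh.le hβ k]

lemma sum_arctanDefect_tanOrbit (m : ℕ) :
    ∑ k ∈ range m, arctanDefect h β (tanOrbit h β k) = m * h - arctan (tanOrbit h β m) := by
  simp only [arctanDefect, ← tanOrbit_succ]
  rw [sum_sub_distrib, sum_range_sub (fun k => arctan (tanOrbit h β k))]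
  simp

lemma arctanDefect_tanOrbit_nonneg (hh : 0 ≤ h) (hβ0 : 0 ≤ β) (hβ : β ≤ 1) (k : ℕ) :
    0 ≤ arctanDefect h β (tanOrbit h β k) :=
  arctanDefect_nonneg hh hβ0 hβ (tanOrbit_nonneg hh hβ k)

lemma arctan_tanOrbit_le (hh : 0 ≤ h) (hβ0 : 0 ≤ β) (hβ : β ≤ 1) (m : ℕ) :
    arctan (tanOrbit h β m) ≤ m * h := by
  have := sum_arctanDefect_tanOrbit (h := h) (β := β) m
  have := sum_nonneg fun k (_ : k ∈ range m) => arctanDefect_tanOrbit_nonneg hh hβ0 hβ k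
  linarith

variable {n : ℕ}

lemma tanOrbit_le (hh : 0 < h) (hβ0 : 0 ≤ β) (hβ : β ≤ 1) (hn : n * h = π / 2) {k : ℕ}
    (hk : k < n) : tanOrbit h β k ≤ (((n : ℝ) - k) * h)⁻¹ := by
  have hkn : (k : ℝ) < n := by exact_mod_cast hk
  refine le_inv_of_arctan_le (by nlinarith) ?_
  have := arctan_tanOrbit_le hh.le hβ0 hβ k
  linarith

lemma mul_tanOrbit_le (hh : 0 < h) (hβ0 : 0 ≤ β) (hβ : β ≤ 1) (hn : n * h = π / 2)
    {k : ℕ} {j : ℝ} (hj : 0 < j) (hjk : j ≤ n - k) : h * tanOrbit h β k ≤ j⁻¹ := by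
  have hk : k < n := by
    have : (k : ℝ) < n := by linarith
    exact_mod_cast this
  calc h * tanOrbit h β k ≤ h * (((n : ℝ) - k) * h)⁻¹ := by
        gcongr; exact tanOrbit_le hh hβ0 hβ hn hk
    _ = ((n : ℝ) - k)⁻¹ := by field_simp
    _ ≤ j⁻¹ := inv_anti₀ hj hjk

end Orbit

section Upper

variable {h β : ℝ} {n : ℕ}

lemma sum_tanOrbit_le (hh : 0 < h) (hβ0 : 0 ≤ β) (hβ : β ≤ 1) (hn : n * h = π / 2) :
    ∑ k ∈ range n, tanOrbit h β k ≤ (1 + log n) / h := by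
  calc ∑ k ∈ range n, tanOrbit h β k ≤ ∑ k ∈ range n, (((n : ℝ) - k) * h)⁻¹ :=
        sum_le_sum fun k hk => tanOrbit_le hh hβ0 hβ hn (mem_range.1 hk)
    _ = (∑ j ∈ range n, ((j : ℝ) + 1)⁻¹) / h := by
        rw [sum_range_natCast_sub (fun x => (x * h)⁻¹), sum_div]
        simp only [mul_inv, div_eq_mul_inv]
    _ ≤ (1 + log n) / h := by gcongr; exact sum_range_inv_succ_le n

lemma sum_sq_tanOrbit_le (hh : 0 < h) (hβ0 : 0 ≤ β) (hβ : β ≤ 1) (hn : n * h = π / 2) :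
    ∑ k ∈ range n, tanOrbit h β k ^ 2 ≤ 2 / h ^ 2 := by
  calc ∑ k ∈ range n, tanOrbit h β k ^ 2
        ≤ ∑ k ∈ range n, ((((n : ℝ) - k) * h)⁻¹) ^ 2 :=
        sum_le_sum fun k hk => pow_le_pow_left₀ (tanOrbit_nonneg hh.le hβ k)
          (tanOrbit_le hh hβ0 hβ hn (mem_range.1 hk)) 2
    _ = (∑ j ∈ range n, (((j : ℝ) + 1) ^ 2)⁻¹) / h ^ 2 := by
        rw [sum_range_natCast_sub (fun x => ((x * h)⁻¹) ^ 2), sum_div]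
        simp only [mul_inv, mul_pow, inv_pow, div_eq_mul_inv]
    _ ≤ 2 / h ^ 2 := by gcongr; exact sum_range_inv_succ_sq_le n

lemma pi_div_two_sub_arctan_tanOrbit_le (hh : 0 < h) (hh1 : h ≤ 1) (hβ0 : 0 ≤ β)
    (hβ : β ≤ 1) (hn : n * h = π / 2) :
    π / 2 - arctan (tanOrbit h β n) ≤ β * h * log n + 7 * h := by
  have hsum := sum_tanOrbit_le hh hβ0 hβ hn
  have hsum_sq := sum_sq_tanOrbit_le hh hβ0 hβ hn
  calc π / 2 - arctan (tanOrbit h β n)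
        = ∑ k ∈ range n, arctanDefect h β (tanOrbit h β k) := by
        rw [sum_arctanDefect_tanOrbit, hn]
    _ ≤ ∑ k ∈ range n,
          (β * h ^ 2 * tanOrbit h β k + h ^ 2 + h ^ 3 * tanOrbit h β k ^ 2 + h ^ 3) :=
        sum_le_sum fun k _ => arctanDefect_le hh.le hβ0 hβ (tanOrbit_nonneg hh.le hβ k)
    _ = β * h ^ 2 * ∑ k ∈ range n, tanOrbit h β k + (n * h) * h
          + h ^ 3 * ∑ k ∈ range n, tanOrbit h β k ^ 2 + (n * h) * h ^ 2 := by
        simp only [sum_add_distrib, ← mul_sum, sum_const, card_range, nsmul_eq_mul]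
        ring
    _ ≤ β * h ^ 2 * ((1 + log n) / h) + π / 2 * h + h ^ 3 * (2 / h ^ 2) + π / 2 * h ^ 2 := by
        rw [hn]; gcongr
    _ ≤ β * h * log n + 7 * h := by
        have : β * h ^ 2 * ((1 + log n) / h) + h ^ 3 * (2 / h ^ 2)
            = β * h * log n + β * h + 2 * h := by
          field_simp; ring
        nlinarith [pi_lt_d2]

end Upper

section Lower

variable {h β : ℝ} {n : ℕ}

lemma mul_log_tanOrbit_le_sum_arctanDefect (hh : 0 < h) (hh10 : h ≤ 1 / 10) (hβ0 : 0 ≤ β)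
    (hβ : β ≤ 1) (hn : n * h = π / 2) (m : ℕ) (hm : m + 10 ≤ n)
    (h1 : 1 ≤ tanOrbit h β m) :
    β * h * (log (tanOrbit h β m) - 2 * h * tanOrbit h β m + 2 / tanOrbit h β m ^ 2)
      ≤ 3 * β * h + ∑ k ∈ range m, arctanDefect h β (tanOrbit h β k) := by
  induction m with
  | zero => simp at h1; linarith
  | succ m ih =>
    rw [sum_range_succ]
    have hd := arctanDefect_tanOrbit_nonneg hh.le hβ0 hβ m
    rcases le_or_gt 1 (tanOrbit h β m) with hym | hym
    · have hha : h * tanOrbit h β m ≤ 1 / 10 := by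
        have : ((m + 1 + 10 : ℕ) : ℝ) ≤ n := by exact_mod_cast hm
        simpa using mul_tanOrbit_le hh hβ0 hβ hn (j := 10) (k := m) (by norm_num)
          (by push_cast at this; linarith)
      have hstep := mul_log_tanStep_sub_log_le hh.le hβ0 hβ hym hha
      rw [← tanOrbit_succ] at hstep
      linear_combination ih (by omega) hym + hstep
    · -- the orbit crosses `1` at this step, and a step from `[0, 1)` lands below `e`
      have hy0 := tanOrbit_nonneg hh.le hβ m
      have hy1 : tanOrbit h β (m + 1) ≤ exp 1 := by
        have h2 : tanOrbit h β m ^ 2 ≤ 1 := pow_le_one₀ hy0 hym.le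
        have h3 : (1 - β) * h ^ 2 * tanOrbit h β m ^ 3 ≤ h ^ 2 := by
          have : tanOrbit h β m ^ 3 ≤ 1 := pow_le_one₀ hy0 hym.le
          nlinarith [mul_nonneg hβ0 (sq_nonneg h), mul_nonneg (sq_nonneg h) (pow_nonneg hy0 3)]
        have := add_one_le_exp 1
        rw [tanOrbit_succ]; unfold tanStep
        nlinarith [mul_le_mul_of_nonneg_left h2 hh.le]
      set y := tanOrbit h β (m + 1)
      have hlog : log y ≤ 1 := by
        rw [← log_exp 1]; exact log_le_log (by linarith) hy1
      have hinv : 2 / y ^ 2 ≤ 2 := by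
        rw [div_le_iff₀ (by positivity)]; nlinarith
      have := sum_nonneg fun k (_ : k ∈ range m) => arctanDefect_tanOrbit_nonneg hh.le hβ0 hβ k
      have : 0 ≤ h * y := mul_nonneg hh.le (tanOrbit_nonneg hh.le hβ _)
      have : log y - 2 * h * y + 2 / y ^ 2 ≤ 3 := by linarith
      nlinarith [mul_le_mul_of_nonneg_left this (by positivity : 0 ≤ β * h)]

lemma mul_log_one_add_tanOrbit_sub_le (hh : 0 < h) (hh10 : h ≤ 1 / 10) (hβ0 : 0 ≤ β)
    (hβ : β ≤ 1) (hn : n * h = π / 2) (h10 : 10 ≤ n) :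
    β * h * log (1 + tanOrbit h β (n - 10)) ≤ π / 2 - arctan (tanOrbit h β n) + 5 * h := by
  set y := tanOrbit h β (n - 10)
  have hy0 : 0 ≤ y := tanOrbit_nonneg hh.le hβ _
  have hβh : 0 ≤ β * h := by positivity
  have hε : ∑ k ∈ range (n - 10), arctanDefect h β (tanOrbit h β k)
      ≤ π / 2 - arctan (tanOrbit h β n) := by
    rw [← hn, ← sum_arctanDefect_tanOrbit]
    exact sum_le_sum_of_subset_of_nonneg (range_subset_range.2 (by omega))
      fun k _ _ => arctanDefect_tanOrbit_nonneg hh.le hβ0 hβ k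
  have hlog2 : log 2 ≤ 1 := by
    have := log_le_sub_one_of_pos (by norm_num : (0 : ℝ) < 2); linarith
  rcases le_or_gt 1 y with hy1 | hy1
  · have hinv := mul_log_tanOrbit_le_sum_arctanDefect hh hh10 hβ0 hβ hn (n - 10) (by omega) hy1
    have hhy : h * y ≤ 1 / 10 := by
      simpa using mul_tanOrbit_le hh hβ0 hβ hn (j := 10) (k := n - 10) (by norm_num)
        (by rw [Nat.cast_sub h10]; push_cast; linarith)
    have hlog : log (1 + y) ≤ 1 + log y := by
      calc log (1 + y) ≤ log (2 * y) := log_le_log (by positivity) (by linarith)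
        _ = log 2 + log y := log_mul two_ne_zero (by positivity)
        _ ≤ 1 + log y := by linarith
    have hβh1 : β * h ≤ h := mul_le_of_le_one_left hh.le hβ
    linear_combination mul_le_mul_of_nonneg_left hlog hβh + hinv + hε
      + 2 * mul_le_mul_of_nonneg_left hhy hβh + (21 / 5) * hβh1 + (4 / 5) * hh.le
      + (by positivity : 0 ≤ β * h * (2 / y ^ 2))
  · have hlog : log (1 + y) ≤ 1 := (log_le_log (by positivity) (by linarith)).trans hlog2
    have hβh1 : β * h ≤ h := mul_le_of_le_one_left hh.le hβ
    linear_combination mul_le_mul_of_nonneg_left hlog hβh + hβh1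
      + (arctan_lt_pi_div_two (tanOrbit h β n)).le + 4 * hh.le

lemma one_add_tanOrbit_le (hh : 0 < h) (hh1 : h ≤ 1) (hβ0 : 0 ≤ β) (hβ : β ≤ 1)
    (hn : n * h = π / 2) (j : ℕ) (hj : j ≤ n) :
    1 + tanOrbit h β n ≤ 3 ^ j * (1 + tanOrbit h β (n - j)) := by
  induction j with
  | zero => simp
  | succ j ih =>
    have hhy : h * tanOrbit h β (n - (j + 1)) ≤ 1 := by
      simpa using mul_tanOrbit_le hh hβ0 hβ hn (j := 1) (k := n - (j + 1)) one_pos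
        (by rw [Nat.cast_sub hj]; push_cast; linarith)
    have hstep := one_add_tanStep_le hh.le hh1 hβ0 (tanOrbit_nonneg hh.le hβ _) hhy
    rw [← tanOrbit_succ, show n - (j + 1) + 1 = n - j by omega] at hstep
    calc 1 + tanOrbit h β n ≤ 3 ^ j * (1 + tanOrbit h β (n - j)) := ih (by omega)
      _ ≤ 3 ^ j * (3 * (1 + tanOrbit h β (n - (j + 1)))) := by gcongr
      _ = 3 ^ (j + 1) * (1 + tanOrbit h β (n - (j + 1))) := by ring

lemma mul_log_tanOrbit_le_pi_div_two_sub_arctan (hh : 0 < h) (hh10 : h ≤ 1 / 10) (hβ0 : 0 ≤ β)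
    (hβ : β ≤ 1) (hn : n * h = π / 2) (h10 : 10 ≤ n) :
    β * h * log (tanOrbit h β n) ≤ π / 2 - arctan (tanOrbit h β n) + 25 * h := by
  have hy := tanOrbit_pos hh hβ (by omega : n ≠ 0)
  have hy' := tanOrbit_nonneg hh.le hβ (n - 10)
  have hlog3 : log 3 ≤ 2 := by
    have := log_le_sub_one_of_pos (by norm_num : (0 : ℝ) < 3); linarith
  have hgrowth : log (tanOrbit h β n) ≤ 20 + log (1 + tanOrbit h β (n - 10)) := by
    calc log (tanOrbit h β n) ≤ log (3 ^ 10 * (1 + tanOrbit h β (n - 10))) :=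
          log_le_log hy (by linarith [one_add_tanOrbit_le hh (by linarith) hβ0 hβ hn 10 h10])
      _ = 10 * log 3 + log (1 + tanOrbit h β (n - 10)) := by
          rw [log_mul (by positivity) (by positivity), log_pow]; push_cast; ring
      _ ≤ 20 + log (1 + tanOrbit h β (n - 10)) := by linarith
  have hβh : 0 ≤ β * h := by positivity
  linear_combination mul_le_mul_of_nonneg_left hgrowth hβh
    + mul_log_one_add_tanOrbit_sub_le hh hh10 hβ0 hβ hn h10
    + 20 * mul_le_of_le_one_left hh.le hβ

end Lower

theorem tendsto_mul_log_mul_tanOrbit {β : ℝ} (hβ0 : 0 < β) (hβ : β ≤ 1) :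
    Tendsto (fun n : ℕ => π / 2 / n * log n * tanOrbit (π / 2 / n) β n) atTop
      (𝓝 β⁻¹) := by
  have hsmall : ∀ᶠ n : ℕ in atTop,
      0 < π / 2 / n ∧ π / 2 / n ≤ 1 / 10 ∧ n * (π / 2 / n) = π / 2 ∧ 10 ≤ n := by
    filter_upwards [eventually_ge_atTop 16] with n hn
    have hn' : (16 : ℝ) ≤ n := by exact_mod_cast hn
    refine ⟨by positivity, ?_, by field_simp, by omega⟩
    rw [div_le_div_iff₀ (by positivity) (by norm_num)]
    nlinarith [pi_lt_d2]
  refine tendsto_mul_log_mul_of_arctan_bounds (C := 25) (by positivity) hβ0 (by norm_num)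
    ?_ ?_ ?_
  · filter_upwards [eventually_ne_atTop 0] with n hn
    exact tanOrbit_pos (by positivity) hβ hn
  · filter_upwards [hsmall] with n ⟨hh, hh10, hn, _⟩
    linear_combination pi_div_two_sub_arctan_tanOrbit_le hh (by linarith) hβ0.le hβ hn
      + 18 * hh.le
  · filter_upwards [hsmall] with n ⟨hh, hh10, hn, h10⟩
    linear_combination mul_log_tanOrbit_le_pi_div_two_sub_arctan hh hh10 hβ0.le hβ hn h10

/-- For an integer `b ≥ 2`, `κ_b = π√b/(√2(b−1))`, and the map
`M̃_n(x) = x + ((b−1)/(2n))x² + ((b−1)(b−2)/(6n²))x³ + κ_b²(b−1)/(bn)`, the `n`-fold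
iterate at `0` satisfies `(log n / n)·M̃_n^[n](0) → 6/(b+1)` as `n → ∞`. -/
theorem stmt19 (b : ℕ) (hb : 2 ≤ b) (kappa : ℝ)
    (hkappa : kappa = Real.pi * Real.sqrt b / (Real.sqrt 2 * ((b : ℝ) - 1)))
    (Mtilde : ℕ → ℝ → ℝ)
    (hMtilde : ∀ n : ℕ, ∀ x : ℝ,
      Mtilde n x = x + (((b : ℝ) - 1) / (2 * n)) * x ^ 2
        + ((((b : ℝ) - 1) * ((b : ℝ) - 2)) / (6 * (n : ℝ) ^ 2)) * x ^ 3
        + kappa ^ 2 * ((b : ℝ) - 1) / ((b : ℝ) * n)) :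
    Tendsto (fun n : ℕ => (Real.log n / n) * (Mtilde n)^[n] 0) atTop
      (nhds (6 / ((b : ℝ) + 1))) := by
  have hb' : (2 : ℝ) ≤ b := by exact_mod_cast hb
  have hb1 : (b : ℝ) - 1 ≠ 0 := by linarith
  set β : ℝ := (b + 1) / (3 * (b - 1))
  have hβ0 : 0 < β := div_pos (by linarith) (by linarith)
  have hβ1 : β ≤ 1 := (div_le_one (by linarith)).2 (by linarith)
  have hkappa_sq : kappa ^ 2 = π ^ 2 * b / (2 * (b - 1) ^ 2) := by
    rw [hkappa, div_pow, mul_pow, mul_pow, sq_sqrt (by linarith), sq_sqrt zero_le_two]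
  have hconj : ∀ n : ℕ, n ≠ 0 → Function.Semiconj (((b : ℝ) - 1) / π * ·) (Mtilde n)
      (tanStep (π / 2 / n) β) := by
    intro n hn x
    have : (n : ℝ) ≠ 0 := by exact_mod_cast hn
    simp only [hMtilde, tanStep, hkappa_sq, β]
    field_simp
    ring
  have hlim := (tendsto_mul_log_mul_tanOrbit hβ0 hβ1).const_mul (2 / ((b : ℝ) - 1))
  rw [show 2 / ((b : ℝ) - 1) * β⁻¹ = 6 / (b + 1) by
    simp only [β]; field_simp; ring] at hlim
  refine hlim.congr' ?_
  filter_upwards [eventually_ne_atTop 0] with n hn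
  have := (hconj n hn).iterate_right n 0
  simp only [mul_zero] at this
  rw [tanOrbit, ← this]
  field_simp
end
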